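/- arXiv:1911.05658 — 10 statements merged into one kernel-verified Lean document; each statement's English description precedes it below -/
import Mathlib

section
/- Let E be a Dedekind σ-complete vector lattice. A sequence (x_p) in E order-converges to some limit x ∈ E if and only if it is order-fundamental. -/
set_option maxHeartbeats 1000000


/-- A sequence `x` in a lattice-ordered group order-converges to `l` if there is an
antitone sequence `ε` with infimum `0` dominating `|x p - l|`. -/
def OrderConv {E : Type*} [Lattice E] [AddCommGroup E] (x : ℕ → E) (l : E) : Prop :=
  ∃ ε : ℕ → E, Antitone ε ∧ IsGLB (Set.range ε) 0 ∧ ∀ p, |x p - l| ≤ ε p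

/-- A sequence `x` is order-fundamental if there is an antitone sequence `ε` with
infimum `0` such that `|x p - x q| ≤ ε n` whenever `p, q ≥ n`. -/
def OrderFund {E : Type*} [Lattice E] [AddCommGroup E] (x : ℕ → E) : Prop :=
  ∃ ε : ℕ → E, Antitone ε ∧ IsGLB (Set.range ε) 0 ∧
    ∀ p q n : ℕ, n ≤ p → n ≤ q → |x p - x q| ≤ ε n

private theorem smul_mono_aux {E : Type*} [Lattice E] [AddCommGroup E] [Module ℝ E]
    [CovariantClass E E (· + ·) (· ≤ ·)]
    (hsmul : ∀ (c : ℝ) (v : E), 0 ≤ c → 0 ≤ v → 0 ≤ c • v)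
    {c : ℝ} (hc : 0 ≤ c) {u v : E} (h : u ≤ v) : c • u ≤ c • v := by
  have h2 := hsmul c (v - u) hc (by simpa using h)
  rw [smul_sub] at h2
  have := add_le_add_right h2 (c • u)
  simpa using this

private theorem abs_sub_le_of_le {E : Type*} [Lattice E] [AddCommGroup E]
    [CovariantClass E E (· + ·) (· ≤ ·)]
    {a b c : E} (h1 : a - b ≤ c) (h2 : b - a ≤ c) : |a - b| ≤ c :=
  abs_le'.mpr ⟨h1, by rwa [neg_sub]⟩

/-- In a Dedekind σ-complete vector lattice, a sequence order-converges to some limit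
iff it is order-fundamental. -/
theorem stmt_0 {E : Type*} [Lattice E] [AddCommGroup E] [Module ℝ E]
    [CovariantClass E E (· + ·) (· ≤ ·)]
    (hsmul : ∀ (c : ℝ) (v : E), 0 ≤ c → 0 ≤ v → 0 ≤ c • v)
    (hDed : ∀ f : ℕ → E, Monotone f → BddAbove (Set.range f) →
      ∃ l, IsLUB (Set.range f) l)
    (x : ℕ → E) :
    (∃ l, OrderConv x l) ↔ OrderFund x := by
  constructor
  · rintro ⟨l, ε, hanti, hglb, hle⟩
    refine ⟨fun n => ε n + ε n, fun m n hmn => add_le_add (hanti hmn) (hanti hmn), ?_, ?_⟩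
    · constructor
      · rintro _ ⟨n, rfl⟩
        have h0 : (0 : E) ≤ ε n := hglb.1 ⟨n, rfl⟩
        exact add_nonneg h0 h0
      · rintro b hb
        have hhalf : ∀ n, (1/2 : ℝ) • b ≤ ε n := by
          intro n
          have hb' : b ≤ ε n + ε n := hb ⟨n, rfl⟩
          calc (1/2 : ℝ) • b ≤ (1/2 : ℝ) • (ε n + ε n) :=
                smul_mono_aux hsmul (by norm_num) hb'
            _ = ε n := by rw [← two_smul ℝ (ε n), smul_smul]; norm_num
        have h0 : (1/2 : ℝ) • b ≤ 0 := hglb.2 (by rintro _ ⟨n, rfl⟩; exact hhalf n)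
        have h2 := smul_mono_aux hsmul (by norm_num : (0:ℝ) ≤ 2) h0
        rw [smul_smul, smul_zero] at h2
        norm_num at h2
        exact h2
    · intro p q n hp hq
      calc |x p - x q| = |(x p - l) + (l - x q)| := by rw [sub_add_sub_cancel]
        _ ≤ |x p - l| + |l - x q| := abs_add_le _ _
        _ = |x p - l| + |x q - l| := by rw [abs_sub_comm l (x q)]
        _ ≤ ε p + ε q := add_le_add (hle p) (hle q)
        _ ≤ ε n + ε n := add_le_add (hanti hp) (hanti hq)
  · rintro ⟨ε, hanti, hglb, hfund⟩
    have hε0 : ∀ n, (0 : E) ≤ ε n := fun n => hglb.1 ⟨n, rfl⟩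
    set f : ℕ → E := fun k => x k - ε k with hf
    have key : ∀ p k, f k ≤ x p + ε p := by
      intro p k
      rcases le_total p k with h | h
      · have h1 : x k - x p ≤ ε p := (abs_le'.mp (hfund k p p h le_rfl)).1
        have h2 : x k ≤ ε p + x p := sub_le_iff_le_add.mp h1
        calc f k ≤ x k := sub_le_self _ (hε0 k)
          _ ≤ ε p + x p := h2
          _ = x p + ε p := add_comm _ _
      · have h1 : x k - x p ≤ ε k := (abs_le'.mp (hfund k p k le_rfl h)).1
        have h2 : x k ≤ ε k + x p := sub_le_iff_le_add.mp h1
        rw [add_comm] at h2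
        have h3 : x k - ε k ≤ x p := sub_le_iff_le_add.mpr h2
        exact le_trans h3 (le_add_of_nonneg_right (hε0 p))
    have hbdd : BddAbove (Set.range (partialSups f)) := by
      refine ⟨x 0 + ε 0, ?_⟩
      rintro _ ⟨n, rfl⟩
      rw [partialSups_le_iff]
      intro k _
      exact key 0 k
    obtain ⟨l, hl⟩ := hDed (partialSups f) (partialSups f).monotone hbdd
    refine ⟨l, ε, hanti, hglb, ?_⟩
    intro p
    apply abs_sub_le_of_le
    · -- x p - l ≤ ε p since x p - ε p = f p ≤ l
      have h1 : f p ≤ l := le_trans (le_partialSups f p) (hl.1 ⟨p, rfl⟩)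
      have : x p - ε p ≤ l := h1
      rw [sub_le_iff_le_add] at this ⊢
      rwa [add_comm l (ε p), ← sub_le_iff_le_add, sub_le_iff_le_add] at this
    · -- l - x p ≤ ε p since x p + ε p is upper bound
      have h2 : l ≤ x p + ε p := by
        apply hl.2
        rintro _ ⟨n, rfl⟩
        rw [partialSups_le_iff]
        intro k _
        exact key p k
      exact sub_le_iff_le_add.mpr (by rwa [add_comm (x p) (ε p)] at h2)
end

section
/- Let E be a Dedekind σ-complete vector lattice and let (u_n) and (U_n) be sequences in E with |u_n| ≤ U_n for all n. If the partial sums S_m = ∑_{n<m} U_n have a least upper bound S ∈ E, then there exists s ∈ E such that the partial sums s_m = ∑_{n<m} u_n order-converge to s, and |s| ≤ S. -/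
section LatticeOrderedGroup

variable {ι E : Type*} [Lattice E] [AddCommGroup E] [AddLeftMono E]

lemma abs_sub_le_add_of_nonneg {a b : E} (ha : 0 ≤ a) (hb : 0 ≤ b) : |a - b| ≤ a + b :=
  abs_le'.2 ⟨(sub_le_self a hb).trans (le_add_of_nonneg_right hb),
    by rw [neg_sub]; exact (sub_le_self b ha).trans (le_add_of_nonneg_left ha)⟩

lemma isGLB_range_sub_of_isLUB {f : ι → E} {a : E} (h : IsLUB (Set.range f) a) :
    IsGLB (Set.range fun i => a - f i) 0 := by
  refine ⟨?_, fun b hb => ?_⟩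
  · rintro _ ⟨i, rfl⟩
    exact sub_nonneg.2 (h.1 ⟨i, rfl⟩)
  · have : a ≤ a - b := h.2 <| by
      rintro _ ⟨i, rfl⟩
      exact le_sub_comm.1 (hb ⟨i, rfl⟩)
    simpa using this

lemma isGLB_range_add_of_antitone [SemilatticeSup ι] {f g : ι → E} (hf : Antitone f)
    (hg : Antitone g) (hf0 : IsGLB (Set.range f) 0) (hg0 : IsGLB (Set.range g) 0) :
    IsGLB (Set.range (f + g)) 0 := by
  refine ⟨?_, fun c hc => hf0.2 ?_⟩
  · rintro _ ⟨i, rfl⟩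
    exact add_nonneg (hf0.1 ⟨i, rfl⟩) (hg0.1 ⟨i, rfl⟩)
  · rintro _ ⟨i, rfl⟩
    -- `c - f i` is a lower bound of `g`, evaluating `c ≤ f + g` at `i ⊔ j`
    have : c - f i ≤ 0 := hg0.2 <| by
      rintro _ ⟨j, rfl⟩
      rw [sub_le_iff_le_add']
      exact (hc ⟨i ⊔ j, rfl⟩).trans (add_le_add (hf le_sup_left) (hg le_sup_right))
    exact sub_nonpos.1 this

lemma add_le_of_isLUB_of_isLUB [SemilatticeSup ι] {f g : ι → E} {a b S : E}
    (hf : Monotone f) (hg : Monotone g) (ha : IsLUB (Set.range f) a)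
    (hb : IsLUB (Set.range g) b) (hS : ∀ i, f i + g i ≤ S) : a + b ≤ S := by
  have hab : ∀ j, a ≤ S - g j := fun j => ha.2 <| by
    rintro _ ⟨i, rfl⟩
    rw [le_sub_iff_add_le]
    exact (add_le_add (hf le_sup_left) (hg le_sup_right)).trans (hS (i ⊔ j))
  have : b ≤ S - a := hb.2 <| by
    rintro _ ⟨j, rfl⟩
    exact le_sub_comm.1 (hab j)
  exact le_sub_iff_add_le'.1 this

lemma orderConv_sub_of_isLUB {P Q : ℕ → E} {p q : E} (hP : Monotone P) (hQ : Monotone Q)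
    (hp : IsLUB (Set.range P) p) (hq : IsLUB (Set.range Q) q) :
    OrderConv (P - Q) (p - q) := by
  have hP' : Antitone fun m => p - P m := fun _ _ hmk => sub_le_sub_left (hP hmk) _
  have hQ' : Antitone fun m => q - Q m := fun _ _ hmk => sub_le_sub_left (hQ hmk) _
  refine ⟨_, hP'.add hQ', isGLB_range_add_of_antitone hP' hQ' (isGLB_range_sub_of_isLUB hp)
    (isGLB_range_sub_of_isLUB hq), fun m => ?_⟩
  have hdiff : (P - Q) m - (p - q) = (q - Q m) - (p - P m) := by
    simp only [Pi.sub_apply]; abel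
  rw [hdiff, add_comm]
  exact abs_sub_le_add_of_nonneg (sub_nonneg.2 (hq.1 ⟨m, rfl⟩)) (sub_nonneg.2 (hp.1 ⟨m, rfl⟩))

lemma monotone_sum_range_of_nonneg {f : ℕ → E} (hf : ∀ n, 0 ≤ f n) :
    Monotone fun m => ∑ n ∈ Finset.range m, f n :=
  fun _ _ hmk => Finset.sum_le_sum_of_subset_of_nonneg (Finset.range_mono hmk) fun n _ _ => hf n

end LatticeOrderedGroup

theorem stmt_1_general {E : Type*} [Lattice E] [AddCommGroup E]
    [CovariantClass E E (· + ·) (· ≤ ·)]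
    (hDed : ∀ f : ℕ → E, Monotone f → BddAbove (Set.range f) →
      ∃ l, IsLUB (Set.range f) l)
    (u U : ℕ → E) (hU : ∀ n, |u n| ≤ U n) (S : E)
    (hS : IsLUB (Set.range (fun m => ∑ n ∈ Finset.range m, U n)) S) :
    ∃ s : E, OrderConv (fun m => ∑ n ∈ Finset.range m, u n) s ∧ |s| ≤ S := by
  set P : ℕ → E := fun m => ∑ n ∈ Finset.range m, (u n)⁺
  set Q : ℕ → E := fun m => ∑ n ∈ Finset.range m, (u n)⁻
  have hPQ : ∀ m, P m + Q m ≤ S := fun m => calc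
    P m + Q m = ∑ n ∈ Finset.range m, |u n| := by
      simp only [P, Q, ← Finset.sum_add_distrib, posPart_add_negPart]
    _ ≤ ∑ n ∈ Finset.range m, U n := Finset.sum_le_sum fun n _ => hU n
    _ ≤ S := hS.1 ⟨m, rfl⟩
  have hP : Monotone P := monotone_sum_range_of_nonneg fun n => posPart_nonneg (u n)
  have hQ : Monotone Q := monotone_sum_range_of_nonneg fun n => negPart_nonneg (u n)
  have hP0 : ∀ m, 0 ≤ P m := fun m => Finset.sum_nonneg fun n _ => posPart_nonneg (u n)
  have hQ0 : ∀ m, 0 ≤ Q m := fun m => Finset.sum_nonneg fun n _ => negPart_nonneg (u n)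
  obtain ⟨p, hp⟩ := hDed P hP ⟨S, by
    rintro _ ⟨m, rfl⟩; exact (le_add_of_nonneg_right (hQ0 m)).trans (hPQ m)⟩
  obtain ⟨q, hq⟩ := hDed Q hQ ⟨S, by
    rintro _ ⟨m, rfl⟩; exact (le_add_of_nonneg_left (hP0 m)).trans (hPQ m)⟩
  have hsum : (fun m => ∑ n ∈ Finset.range m, u n) = P - Q := by
    ext m
    simp only [Pi.sub_apply, P, Q, ← Finset.sum_sub_distrib, posPart_sub_negPart]
  refine ⟨p - q, hsum ▸ orderConv_sub_of_isLUB hP hQ hp hq, ?_⟩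
  calc |p - q| ≤ p + q :=
        abs_sub_le_add_of_nonneg ((hP0 0).trans (hp.1 ⟨0, rfl⟩)) ((hQ0 0).trans (hq.1 ⟨0, rfl⟩))
    _ ≤ S := add_le_of_isLUB_of_isLUB hP hQ hp hq hPQ

/-- In a Dedekind σ-complete vector lattice, if `|u n| ≤ U n` for all `n` and the
partial sums of `U` have a least upper bound `S`, then the partial sums of `u`
order-converge to some `s` with `|s| ≤ S`. -/
theorem stmt_1 {E : Type*} [Lattice E] [AddCommGroup E] [Module ℝ E]
    [CovariantClass E E (· + ·) (· ≤ ·)]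
    (hsmul : ∀ (c : ℝ) (v : E), 0 ≤ c → 0 ≤ v → 0 ≤ c • v)
    (hDed : ∀ f : ℕ → E, Monotone f → BddAbove (Set.range f) →
      ∃ l, IsLUB (Set.range f) l)
    (u U : ℕ → E) (hU : ∀ n, |u n| ≤ U n) (S : E)
    (hS : IsLUB (Set.range (fun m => ∑ n ∈ Finset.range m, U n)) S) :
    ∃ s : E, OrderConv (fun m => ∑ n ∈ Finset.range m, u n) s ∧ |s| ≤ S :=
  stmt_1_general hDed u U hU S hS
end

section
/- Let E and F be vector lattices with F Dedekind σ-complete, and for each n ≥ 1 let A_n be an n-multilinear map from E^n to F that is positive, i.e. A_n(X_1,…,X_n) ≥ 0 whenever X_1,…,X_n ≥ 0. If for some X ≥ 0 in E the partial sums ∑_{n=1}^{m} (1/n!)·A_n(X,…,X) are bounded above in F, then for every X' with 0 ≤ X' ≤ X the partial sums ∑_{n=1}^{m} (1/n!)·A_n(X',…,X') are also bounded above; that is, the set of nonnegative points of convergence of a power series of positive type is an order-star (it contains the whole order interval ⟨0, X⟩ together with each of its points X). -/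
/-!
A positive multilinear map is monotone on the positive cone: writing `X = X' + (X - X')` and
expanding by multilinearity, `A (X, …, X)` is `A (X', …, X')` plus a sum of values of `A` at
nonnegative arguments. Hence the partial sums at `X'` are dominated termwise by those at `X`,
and any upper bound for the latter bounds the former.
-/

theorem MultilinearMap.map_le_map_of_map_nonneg {R ι N : Type*} {M : ι → Type*} [Semiring R]
    [Fintype ι] [DecidableEq ι] [∀ i, AddCommGroup (M i)] [∀ i, Module R (M i)]
    [∀ i, Preorder (M i)] [∀ i, AddRightMono (M i)]
    [AddCommGroup N] [Module R N] [Preorder N] [AddLeftMono N]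
    (f : MultilinearMap R M N) (hf : ∀ m, 0 ≤ m → 0 ≤ f m)
    {m m' : ∀ i, M i} (hm : 0 ≤ m) (hmm' : m ≤ m') : f m ≤ f m' := by
  have hdiff : 0 ≤ m' - m := fun i => sub_nonneg.2 (hmm' i)
  have hterm : ∀ s : Finset ι, 0 ≤ f (s.piecewise m (m' - m)) := fun s =>
    hf _ (s.le_piecewise_of_le_of_le hm hdiff)
  calc f m = f ((Finset.univ : Finset ι).piecewise m (m' - m)) := by simp
    _ ≤ ∑ s : Finset ι, f (s.piecewise m (m' - m)) :=
      Finset.single_le_sum (fun s _ => hterm s) (Finset.mem_univ _)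
    _ = f m' := by rw [← f.map_add_univ, add_sub_cancel]

theorem stmt_2_general {E F : Type*}
    [Lattice E] [AddCommGroup E] [Module ℝ E]
    [CovariantClass E E (· + ·) (· ≤ ·)]
    [Lattice F] [AddCommGroup F] [Module ℝ F]
    [CovariantClass F F (· + ·) (· ≤ ·)]
    (hsmulF : ∀ (c : ℝ) (w : F), 0 ≤ c → 0 ≤ w → 0 ≤ c • w)
    (A : (n : ℕ) → MultilinearMap ℝ (fun _ : Fin n => E) F)
    (hpos : ∀ n, 1 ≤ n → ∀ X : Fin n → E, (∀ i, 0 ≤ X i) → 0 ≤ A n X)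
    (X : E)
    (hbdd : ∃ B : F, ∀ m : ℕ,
      (∑ n ∈ Finset.Icc 1 m, ((n.factorial : ℝ)⁻¹) • A n (fun _ => X)) ≤ B)
    (X' : E) (hX'0 : 0 ≤ X') (hX' : X' ≤ X) :
    ∃ B' : F, ∀ m : ℕ,
      (∑ n ∈ Finset.Icc 1 m, ((n.factorial : ℝ)⁻¹) • A n (fun _ => X')) ≤ B' := by
  have smul_mono : ∀ (c : ℝ) {a b : F}, 0 ≤ c → a ≤ b → c • a ≤ c • b := fun c a b hc hab =>
    sub_nonneg.1 (by simpa [smul_sub] using hsmulF c _ hc (sub_nonneg.2 hab))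
  obtain ⟨B, hB⟩ := hbdd
  refine ⟨B, fun m => (Finset.sum_le_sum fun n hn => smul_mono _ (by positivity) ?_).trans (hB m)⟩
  exact (A n).map_le_map_of_map_nonneg (hpos n (Finset.mem_Icc.1 hn).1) (fun _ => hX'0)
    (fun _ => hX')

/-- The set of nonnegative points at which a power series of positive type has bounded
partial sums is an order-star: with each point `X` it contains the whole order
interval `⟨0, X⟩`. -/
theorem stmt_2 {E F : Type*}
    [Lattice E] [AddCommGroup E] [Module ℝ E]
    [CovariantClass E E (· + ·) (· ≤ ·)]
    [Lattice F] [AddCommGroup F] [Module ℝ F]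
    [CovariantClass F F (· + ·) (· ≤ ·)]
    (hsmulE : ∀ (c : ℝ) (v : E), 0 ≤ c → 0 ≤ v → 0 ≤ c • v)
    (hsmulF : ∀ (c : ℝ) (w : F), 0 ≤ c → 0 ≤ w → 0 ≤ c • w)
    (hDedF : ∀ f : ℕ → F, Monotone f → BddAbove (Set.range f) →
      ∃ l, IsLUB (Set.range f) l)
    (A : (n : ℕ) → MultilinearMap ℝ (fun _ : Fin n => E) F)
    (hpos : ∀ n, 1 ≤ n → ∀ X : Fin n → E, (∀ i, 0 ≤ X i) → 0 ≤ A n X)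
    (X : E) (hX : 0 ≤ X)
    (hbdd : ∃ B : F, ∀ m : ℕ,
      (∑ n ∈ Finset.Icc 1 m, ((n.factorial : ℝ)⁻¹) • A n (fun _ => X)) ≤ B)
    (X' : E) (hX'0 : 0 ≤ X') (hX' : X' ≤ X) :
    ∃ B' : F, ∀ m : ℕ,
      (∑ n ∈ Finset.Icc 1 m, ((n.factorial : ℝ)⁻¹) • A n (fun _ => X')) ≤ B' :=
  stmt_2_general hsmulF A hpos X hbdd X' hX'0 hX'
end

section
/- Let E and F be vector lattices and let a and A be n-multilinear maps from E^n to F such that |a(x_1,…,x_n)| ≤ A(X_1,…,X_n) whenever |x_i| ≤ X_i for i = 1,…,n. Then for all x, h, X, H ∈ E with |x| ≤ X and |h| ≤ H, the diagonal values satisfy |a(x+h,…,x+h) − a(x,…,x)| ≤ A(X+H,…,X+H) − A(X,…,X). -/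
/-!
Expanding both diagonal values by multilinearity, `a (x + h, …, x + h)` is the sum over
`s ⊆ {1, …, n}` of `a` evaluated at `h` in the slots of `s` and at `x` elsewhere, and likewise
for `A`. The term `s = ∅` is exactly `a (x, …, x)` (resp. `A (X, …, X)`), so both differences are
sums over nonempty `s`, and the majorization hypothesis bounds them term by term.
-/

open Finset

theorem MultilinearMap.map_add_sub_eq_sum_erase_empty {R ι : Type*} {M : ι → Type*} {N : Type*}
    [CommSemiring R] [∀ i, AddCommMonoid (M i)] [AddCommGroup N] [∀ i, Module R (M i)]
    [Module R N] [DecidableEq ι] [Fintype ι] (f : MultilinearMap R M N) (m m' : ∀ i, M i) :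
    f (m + m') - f m' = ∑ s ∈ univ.erase (∅ : Finset ι), f (s.piecewise m m') := by
  rw [sum_erase_eq_sub (mem_univ _), piecewise_empty, f.map_add_univ]

theorem Finset.abs_sum_le_sum_abs_of_lattice {ι G : Type*} [Lattice G] [AddCommGroup G]
    [IsOrderedAddMonoid G] (s : Finset ι) (f : ι → G) :
    |∑ i ∈ s, f i| ≤ ∑ i ∈ s, |f i| :=
  le_sum_of_subadditive _ abs_zero.le abs_add_le s f

theorem MultilinearMap.abs_map_add_sub_map_le {R ι E F : Type*} [CommSemiring R] [Fintype ι]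
    [Lattice E] [AddCommGroup E] [Module R E]
    [Lattice F] [AddCommGroup F] [IsOrderedAddMonoid F] [Module R F]
    {a A : MultilinearMap R (fun _ : ι => E) F}
    (hmaj : ∀ x X : ι → E, (∀ i, |x i| ≤ X i) → |a x| ≤ A X)
    {x h X H : ι → E} (hx : ∀ i, |x i| ≤ X i) (hh : ∀ i, |h i| ≤ H i) :
    |a (x + h) - a x| ≤ A (X + H) - A X := by
  classical
  rw [add_comm x, add_comm X, a.map_add_sub_eq_sum_erase_empty, A.map_add_sub_eq_sum_erase_empty]
  refine (abs_sum_le_sum_abs_of_lattice _ _).trans (sum_le_sum fun s _ ↦ hmaj _ _ fun i ↦ ?_)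
  by_cases hi : i ∈ s
  · simpa only [piecewise_eq_of_mem _ _ _ hi] using hh i
  · simpa only [piecewise_eq_of_notMem _ _ _ hi] using hx i

theorem stmt_5_general {E F : Type*} (n : ℕ)
    [Lattice E] [AddCommGroup E] [Module ℝ E]
    [Lattice F] [AddCommGroup F] [Module ℝ F]
    [CovariantClass F F (· + ·) (· ≤ ·)]
    (a A : MultilinearMap ℝ (fun _ : Fin n => E) F)
    (hmaj : ∀ (x X : Fin n → E), (∀ i, |x i| ≤ X i) → |a x| ≤ A X)
    (x h X H : E) (hx : |x| ≤ X) (hh : |h| ≤ H) :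
    |a (fun _ => x + h) - a (fun _ => x)|
      ≤ A (fun _ => X + H) - A (fun _ => X) := by
  have : IsOrderedAddMonoid F := { add_le_add_left := fun _ _ hle c ↦ add_le_add_left hle c }
  exact MultilinearMap.abs_map_add_sub_map_le hmaj (fun _ ↦ hx) (fun _ ↦ hh)

/-- Kantorovich's inequality for a majorized multilinear coefficient: if
`|a (x₁, …, xₙ)| ≤ A (X₁, …, Xₙ)` whenever `|xᵢ| ≤ Xᵢ`, then on the diagonal
`|a (x+h, …, x+h) - a (x, …, x)| ≤ A (X+H, …, X+H) - A (X, …, X)`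
whenever `|x| ≤ X` and `|h| ≤ H`. -/
theorem stmt_5 {E F : Type*} (n : ℕ)
    [Lattice E] [AddCommGroup E] [Module ℝ E]
    [CovariantClass E E (· + ·) (· ≤ ·)]
    [Lattice F] [AddCommGroup F] [Module ℝ F]
    [CovariantClass F F (· + ·) (· ≤ ·)]
    (hsmulE : ∀ (c : ℝ) (v : E), 0 ≤ c → 0 ≤ v → 0 ≤ c • v)
    (hsmulF : ∀ (c : ℝ) (w : F), 0 ≤ c → 0 ≤ w → 0 ≤ c • w)
    (a A : MultilinearMap ℝ (fun _ : Fin n => E) F)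
    (hmaj : ∀ (x X : Fin n → E), (∀ i, |x i| ≤ X i) → |a x| ≤ A X)
    (x h X H : E) (hx : |x| ≤ X) (hh : |h| ≤ H) :
    |a (fun _ => x + h) - a (fun _ => x)|
      ≤ A (fun _ => X + H) - A (fun _ => X) :=
  stmt_5_general n a A hmaj x h X H hx hh
end

section
/- Let E, F, G be real Banach spaces, let p be a formal multilinear series from E to F with p_0 = 0 and q a formal multilinear series from F to G. Let P, Q : ℕ → ℝ satisfy P_0 = 0, 0 ≤ P_n, 0 ≤ Q_n, ‖p_n‖ ≤ P_n and ‖q_n‖ ≤ Q_n for all n, and let P̂ and Q̂ denote the formal multilinear series from ℝ to ℝ whose n-th terms are the n-multilinear maps (t_1,…,t_n) ↦ P_n·t_1⋯t_n and (t_1,…,t_n) ↦ Q_n·t_1⋯t_n. Then for every n, the n-th term of the composition q ∘ p of formal multilinear series satisfies ‖(q ∘ p)_n‖ ≤ (Q̂ ∘ P̂)_n(1,…,1), i.e. the composed series is majorized coefficientwise by the composition of the majorant series. -/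
/-!
Each term of `(q.comp p) n` is `q.compAlongComposition p c` for a composition `c` of `n`, whose
norm is at most `‖q c.length‖ * ∏ ‖p (c.blocksFun i)‖`, hence at most
`Q c.length * ∏ P (c.blocksFun i)`. Evaluating the scalar composition `Q̂ ∘ P̂` at `(1, …, 1)`
yields exactly the sum of these bounds over all compositions of `n`.
-/

/-- The scalar majorant series with coefficients `P : ℕ → ℝ`, whose `n`-th term is
the `n`-multilinear map `(t₁, …, tₙ) ↦ P n * t₁ ⋯ tₙ`. -/
noncomputable def majorantSeries (P : ℕ → ℝ) : FormalMultilinearSeries ℝ ℝ ℝ :=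
  fun n => P n • ContinuousMultilinearMap.mkPiAlgebraFin ℝ n ℝ

namespace FormalMultilinearSeries

variable {𝕜 E F G : Type*} [NontriviallyNormedField 𝕜]
  [NormedAddCommGroup E] [NormedSpace 𝕜 E] [NormedAddCommGroup F] [NormedSpace 𝕜 F]
  [NormedAddCommGroup G] [NormedSpace 𝕜 G]

theorem norm_comp_le (q : FormalMultilinearSeries 𝕜 F G) (p : FormalMultilinearSeries 𝕜 E F)
    (n : ℕ) :
    ‖(q.comp p) n‖ ≤ ∑ c : Composition n, ‖q c.length‖ * ∏ i, ‖p (c.blocksFun i)‖ :=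
  (norm_sum_le _ _).trans <| Finset.sum_le_sum fun c _ => q.compAlongComposition_norm p c

theorem norm_comp_le_of_norm_le (q : FormalMultilinearSeries 𝕜 F G)
    (p : FormalMultilinearSeries 𝕜 E F) {P Q : ℕ → ℝ} (hQ : ∀ n, 0 ≤ Q n)
    (hpP : ∀ n, ‖p n‖ ≤ P n) (hqQ : ∀ n, ‖q n‖ ≤ Q n) (n : ℕ) :
    ‖(q.comp p) n‖ ≤ ∑ c : Composition n, Q c.length * ∏ i, P (c.blocksFun i) := by
  refine (q.norm_comp_le p n).trans <| Finset.sum_le_sum fun c _ => ?_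
  gcongr with i
  exacts [hQ _, hqQ _, hpP _]

end FormalMultilinearSeries

theorem majorantSeries_apply (P : ℕ → ℝ) (n : ℕ) (t : Fin n → ℝ) :
    majorantSeries P n t = P n * ∏ i, t i := by
  simp [majorantSeries, List.prod_ofFn]

theorem majorantSeries_coeff (P : ℕ → ℝ) (n : ℕ) : (majorantSeries P).coeff n = P n := by
  rw [FormalMultilinearSeries.coeff, majorantSeries_apply]
  simp

theorem majorantSeries_comp_apply_one (P Q : ℕ → ℝ) (n : ℕ) :
    ((majorantSeries Q).comp (majorantSeries P)) n (fun _ => 1) =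
      ∑ c : Composition n, Q c.length * ∏ i, P (c.blocksFun i) := by
  simp [FormalMultilinearSeries.comp, FormalMultilinearSeries.applyComposition,
    majorantSeries_coeff, mul_comm]

theorem stmt_8_general {E F G : Type*}
    [NormedAddCommGroup E] [NormedSpace ℝ E]
    [NormedAddCommGroup F] [NormedSpace ℝ F]
    [NormedAddCommGroup G] [NormedSpace ℝ G]
    (p : FormalMultilinearSeries ℝ E F) (q : FormalMultilinearSeries ℝ F G)
    (P Q : ℕ → ℝ)
    (hQpos : ∀ n, 0 ≤ Q n)
    (hpP : ∀ n, ‖p n‖ ≤ P n) (hqQ : ∀ n, ‖q n‖ ≤ Q n) (n : ℕ) :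
    ‖(q.comp p) n‖ ≤
      ((majorantSeries Q).comp (majorantSeries P)) n (fun _ => (1 : ℝ)) :=
  (q.norm_comp_le_of_norm_le p hQpos hpP hqQ n).trans_eq
    (majorantSeries_comp_apply_one P Q n).symm

/-- Coefficientwise majorization of the composition of formal multilinear series:
if `‖p n‖ ≤ P n` and `‖q n‖ ≤ Q n` (with `p 0 = 0`, `P 0 = 0`), then
`‖(q ∘ p) n‖ ≤ (Q̂ ∘ P̂) n (1, …, 1)` where `P̂`, `Q̂` are the scalar majorant
series. -/
theorem stmt_8 {E F G : Type*}
    [NormedAddCommGroup E] [NormedSpace ℝ E] [CompleteSpace E]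
    [NormedAddCommGroup F] [NormedSpace ℝ F] [CompleteSpace F]
    [NormedAddCommGroup G] [NormedSpace ℝ G] [CompleteSpace G]
    (p : FormalMultilinearSeries ℝ E F) (q : FormalMultilinearSeries ℝ F G)
    (hp0 : p 0 = 0) (P Q : ℕ → ℝ) (hP0 : P 0 = 0)
    (hPpos : ∀ n, 0 ≤ P n) (hQpos : ∀ n, 0 ≤ Q n)
    (hpP : ∀ n, ‖p n‖ ≤ P n) (hqQ : ∀ n, ‖q n‖ ≤ Q n) (n : ℕ) :
    ‖(q.comp p) n‖ ≤
      ((majorantSeries Q).comp (majorantSeries P)) n (fun _ => (1 : ℝ)) :=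
  stmt_8_general p q P Q hQpos hpP hqQ n
end

section
/- Let E, F, G be real Banach spaces, let p be a formal multilinear series from E to F with p_0 = 0 and q a formal multilinear series from F to G. Let P, Q : ℕ → ℝ satisfy P_0 = 0, 0 ≤ P_n, 0 ≤ Q_n, ‖p_n‖ ≤ P_n and ‖q_n‖ ≤ Q_n for all n. Let r ≥ 0 be such that ∑_n P_n·r^n is summable with sum s, and such that ∑_n Q_n·s^n is summable. Then ∑_n ‖(q ∘ p)_n‖·r^n is summable; in particular the series of the composition q ∘ p converges absolutely at every point x ∈ E with ‖x‖ ≤ r. -/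
open scoped ENNReal
open ENNReal

lemma tsum_pi_fin_pow (g : ℕ → ℝ≥0∞) : ∀ m : ℕ,
    ∑' f : Fin m → ℕ, ∏ j, g (f j) = (∑' k, g k) ^ m := by
  intro m
  induction m with
  | zero => simp [tsum_fintype]
  | succ m ih =>
    rw [← (Fin.consEquiv (fun _ : Fin (m+1) => ℕ)).tsum_eq, ENNReal.tsum_prod']
    simp only [Fin.consEquiv_apply, Fin.prod_univ_succ, Fin.cons_zero, Fin.cons_succ]
    simp_rw [ENNReal.tsum_mul_left, ENNReal.tsum_mul_right, ih, pow_succ, mul_comm]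



/-- Convergence of the composition of majorized formal multilinear series: if
`‖p n‖ ≤ P n`, `‖q n‖ ≤ Q n` (with `p 0 = 0`, `P 0 = 0`), `∑ P n * r ^ n` is
summable with sum `s` and `∑ Q n * s ^ n` is summable, then
`∑ ‖(q ∘ p) n‖ * r ^ n` is summable; in particular the composed series converges
absolutely at every `x` with `‖x‖ ≤ r`. -/
theorem stmt_9 {E F G : Type*}
    [NormedAddCommGroup E] [NormedSpace ℝ E] [CompleteSpace E]
    [NormedAddCommGroup F] [NormedSpace ℝ F] [CompleteSpace F]
    [NormedAddCommGroup G] [NormedSpace ℝ G] [CompleteSpace G]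
    (p : FormalMultilinearSeries ℝ E F) (q : FormalMultilinearSeries ℝ F G)
    (hp0 : p 0 = 0) (P Q : ℕ → ℝ) (hP0 : P 0 = 0)
    (hPpos : ∀ n, 0 ≤ P n) (hQpos : ∀ n, 0 ≤ Q n)
    (hpP : ∀ n, ‖p n‖ ≤ P n) (hqQ : ∀ n, ‖q n‖ ≤ Q n)
    (r s : ℝ) (hr : 0 ≤ r)
    (hPsum : HasSum (fun n => P n * r ^ n) s)
    (hQsum : Summable (fun n => Q n * s ^ n)) :
    Summable (fun n => ‖(q.comp p) n‖ * r ^ n) ∧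
    ∀ x : E, ‖x‖ ≤ r → Summable (fun n => ‖(q.comp p) n (fun _ => x)‖) := by
  have hPr : ∀ n, 0 ≤ P n * r ^ n := fun n => mul_nonneg (hPpos n) (pow_nonneg hr n)
  have hs0 : 0 ≤ s := hasSum_le (fun n => hPr n) hasSum_zero hPsum
  have hQs : ∀ n, 0 ≤ Q n * s ^ n := fun n => mul_nonneg (hQpos n) (pow_nonneg hs0 n)
  -- notation
  set g : ℕ → ℝ≥0∞ := fun k => ENNReal.ofReal (P k) * ENNReal.ofReal r ^ k with hg
  have hA : ∑' k, g k = ENNReal.ofReal s := by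
    rw [← hPsum.tsum_eq, ENNReal.ofReal_tsum_of_nonneg hPr hPsum.summable]
    congr 1 with k
    rw [ENNReal.ofReal_mul (hPpos k), ENNReal.ofReal_pow hr]
  set T : ℝ≥0∞ := ∑' i : Σ m, Fin m → ℕ, ENNReal.ofReal (Q i.1) * ∏ j, g (i.2 j) with hTdef
  have hT : T ≠ ∞ := by
    rw [hTdef, ENNReal.tsum_sigma']
    simp_rw [ENNReal.tsum_mul_left, tsum_pi_fin_pow, hA]
    have : ∀ m : ℕ, ENNReal.ofReal (Q m) * ENNReal.ofReal s ^ m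
        = ENNReal.ofReal (Q m * s ^ m) := by
      intro m; rw [ENNReal.ofReal_mul (hQpos m), ENNReal.ofReal_pow hs0]
    simp_rw [this]
    rw [← ENNReal.ofReal_tsum_of_nonneg hQs hQsum]
    exact ENNReal.ofReal_ne_top
  -- per-composition bound
  have hle : ∀ (n : ℕ) (c : Composition n),
      ENNReal.ofReal (‖q.compAlongComposition p c‖ * r ^ n)
        ≤ ENNReal.ofReal (Q c.length) * ∏ j, g (c.blocksFun j) := by
    intro n c
    have hprod : ∏ j, g (c.blocksFun j)
        = ENNReal.ofReal ((∏ j, P (c.blocksFun j)) * r ^ n) := by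
      rw [ENNReal.ofReal_mul (Finset.prod_nonneg fun j _ => hPpos _),
        ENNReal.ofReal_pow hr,
        ENNReal.ofReal_prod_of_nonneg fun j _ => hPpos _]
      simp only [hg]
      rw [Finset.prod_mul_distrib, Finset.prod_pow_eq_pow_sum, c.sum_blocksFun]
    rw [hprod, ← ENNReal.ofReal_mul (hQpos _)]
    apply ENNReal.ofReal_le_ofReal
    have h1 : ‖q.compAlongComposition p c‖ ≤ Q c.length * ∏ j, P (c.blocksFun j) := by
      refine (q.compAlongComposition_norm p c).trans ?_
      exact mul_le_mul (hqQ _) (Finset.prod_le_prod (fun j _ => norm_nonneg _)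
        (fun j _ => hpP _)) (Finset.prod_nonneg fun j _ => norm_nonneg _) (hQpos _)
    calc ‖q.compAlongComposition p c‖ * r ^ n
        ≤ (Q c.length * ∏ j, P (c.blocksFun j)) * r ^ n :=
          mul_le_mul_of_nonneg_right h1 (pow_nonneg hr n)
      _ = Q c.length * ((∏ j, P (c.blocksFun j)) * r ^ n) := by ring
  -- injective reindexing
  have hinj : Function.Injective
      (fun i : Σ n, Composition n => (⟨i.2.length, i.2.blocksFun⟩ : Σ m, Fin m → ℕ)) := by
    rintro ⟨n, c⟩ ⟨n', c'⟩ h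
    have key : ∀ (a b : Σ m, Fin m → ℕ), a = b → List.ofFn a.2 = List.ofFn b.2 := by
      rintro a b rfl; rfl
    apply Composition.sigma_eq_iff_blocks_eq.mpr
    rw [← Composition.ofFn_blocksFun, ← Composition.ofFn_blocksFun]
    exact key _ _ h
  -- finiteness of the main sum
  have hcomp : ∀ n, 0 ≤ ‖(q.comp p) n‖ * r ^ n :=
    fun n => mul_nonneg (norm_nonneg _) (pow_nonneg hr n)
  have main : ∑' n, ENNReal.ofReal (‖(q.comp p) n‖ * r ^ n) ≠ ∞ := by
    have step1 : ∀ n, ENNReal.ofReal (‖(q.comp p) n‖ * r ^ n)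
        ≤ ∑ c : Composition n, ENNReal.ofReal (‖q.compAlongComposition p c‖ * r ^ n) := by
      intro n
      rw [← ENNReal.ofReal_sum_of_nonneg fun c _ =>
        mul_nonneg (norm_nonneg _) (pow_nonneg hr n)]
      apply ENNReal.ofReal_le_ofReal
      rw [← Finset.sum_mul]
      exact mul_le_mul_of_nonneg_right (norm_sum_le _ _) (pow_nonneg hr n)
    refine ne_top_of_le_ne_top hT ?_
    calc ∑' n, ENNReal.ofReal (‖(q.comp p) n‖ * r ^ n)
        ≤ ∑' n, ∑ c : Composition n, ENNReal.ofReal (‖q.compAlongComposition p c‖ * r ^ n) :=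
          ENNReal.tsum_le_tsum step1
      _ = ∑' i : Σ n, Composition n, ENNReal.ofReal (‖q.compAlongComposition p i.2‖ * r ^ i.1) := by
          rw [ENNReal.tsum_sigma']
          congr 1 with n
          rw [tsum_fintype]
      _ ≤ ∑' i : Σ n, Composition n, ENNReal.ofReal (Q i.2.length) * ∏ j, g (i.2.blocksFun j) :=
          ENNReal.tsum_le_tsum fun i => hle i.1 i.2
      _ ≤ T := by
          rw [hTdef]
          exact ENNReal.tsum_comp_le_tsum_of_injective hinj _
  have hsum1 : Summable (fun n => ‖(q.comp p) n‖ * r ^ n) := by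
    have := ENNReal.summable_toReal main
    simpa only [ENNReal.toReal_ofReal (hcomp _)] using this
  refine ⟨hsum1, fun x hx => ?_⟩
  refine Summable.of_nonneg_of_le (fun n => norm_nonneg _) (fun n => ?_) hsum1
  calc ‖(q.comp p) n (fun _ => x)‖ ≤ ‖(q.comp p) n‖ * ∏ _i : Fin n, ‖x‖ :=
        ((q.comp p) n).le_opNorm _
    _ = ‖(q.comp p) n‖ * ‖x‖ ^ n := by simp
    _ ≤ ‖(q.comp p) n‖ * r ^ n :=
        mul_le_mul_of_nonneg_left (pow_le_pow_left₀ (norm_nonneg x) hx n) (norm_nonneg _)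
end

section
/- Let E be a real Banach space, X̃ ≥ 0 a real number, and F : ℝ → ℝ a function satisfying: (i) F is monotone on [0, X̃] (0 ≤ a ≤ b ≤ X̃ implies F(a) ≤ F(b)); (ii) F(0) ≥ 0; (iii) F(X̃) ≤ X̃; (iv) for every monotone increasing sequence (t_p) in [0, X̃] converging to L, F(t_p) converges to F(L). Let f : E → E satisfy ‖f(0)‖ ≤ F(0), and ‖f(x+h) − f(x)‖ ≤ F(X+H) − F(X) whenever ‖x‖ ≤ X, ‖h‖ ≤ H, 0 ≤ X, 0 ≤ H and X + H ≤ X̃. Define X^(0) = 0, X^(p+1) = F(X^(p)) and x^(0) = 0, x^(p+1) = f(x^(p)). Then (X^(p)) is monotone increasing and converges to some X* ∈ [0, X̃] with F(X*) = X*, and (x^(p)) converges in norm to some x* ∈ E with f(x*) = x* and ‖x*‖ ≤ X*. -/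
/-!
The real iterates `Xₚ = F^[p] 0` stay in `[0, X̃]` and increase, since `F` is monotone there and
maps `[0, X̃]` into itself; they converge to some `X*`, which is a fixed point of `F` by the
sequential continuity of `F` along increasing sequences. Applying the majorant inequality with
`x = xₚ`, `h = xₚ₊₁ - xₚ` shows inductively `‖xₚ‖ ≤ Xₚ` and `‖xₚ₊₁ - xₚ‖ ≤ Xₚ₊₁ - Xₚ`, so by
telescoping `‖x_q - xₚ‖ ≤ X_q - Xₚ`: the iterates `xₚ` form a Cauchy sequence whose limit `x*`
satisfies `‖x* - xₚ‖ ≤ X* - Xₚ`. One more application of the majorant inequality, with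
`h = x* - xₚ`, gives `‖f x* - xₚ₊₁‖ ≤ F X* - Xₚ₊₁ = X* - Xₚ₊₁ → 0`, hence `f x* = x*`.
-/

open Filter Set Function Topology

theorem MonotoneOn.monotone_iterate_of_le_map {α : Type*} [Preorder α] {F : α → α} {s : Set α}
    {x : α} (hF : MonotoneOn F s) (hs : MapsTo F s s) (hx : x ∈ s) (hxF : x ≤ F x) :
    Monotone fun n => F^[n] x := by
  refine monotone_nat_of_le_succ fun n => ?_
  induction n with
  | zero => exact hxF
  | succ n ih =>
    simp only [iterate_succ_apply' F] at ih ⊢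
    exact hF (hs.iterate n hx) (hs (hs.iterate n hx)) ih

theorem isFixedPt_of_tendsto_iterate_of_tendsto_map {α : Type*} [TopologicalSpace α] [T2Space α]
    {f : α → α} {x y : α} (hy : Tendsto (fun n => f^[n] x) atTop (𝓝 y))
    (hf : Tendsto (fun n => f (f^[n] x)) atTop (𝓝 (f y))) : IsFixedPt f y := by
  refine tendsto_nhds_unique ((tendsto_add_atTop_iff_nat 1).1 ?_) hy
  simpa only [iterate_succ_apply'] using hf

theorem cauchySeq_of_dist_le_dist {α β : Type*} [PseudoMetricSpace α] [PseudoMetricSpace β]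
    {x : ℕ → α} {X : ℕ → β} (h : ∀ p q, dist (x p) (x q) ≤ dist (X p) (X q))
    (hX : CauchySeq X) : CauchySeq x :=
  Metric.cauchySeq_iff.2 fun ε hε =>
    (Metric.cauchySeq_iff.1 hX ε hε).imp fun _ hN m hm n hn => (h m n).trans_lt (hN m hm n hn)

section Telescoping

variable {E : Type*} [SeminormedAddCommGroup E] {x : ℕ → E} {X : ℕ → ℝ}

theorem norm_sub_le_sub_of_norm_sub_succ_le
    (hstep : ∀ p, ‖x (p + 1) - x p‖ ≤ X (p + 1) - X p) {p q : ℕ} (hpq : p ≤ q) :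
    ‖x q - x p‖ ≤ X q - X p := by
  induction q, hpq using Nat.le_induction with
  | base => simp
  | succ q _ ih =>
    calc ‖x (q + 1) - x p‖ = ‖(x (q + 1) - x q) + (x q - x p)‖ := by rw [sub_add_sub_cancel]
      _ ≤ ‖x (q + 1) - x q‖ + ‖x q - x p‖ := norm_add_le _ _
      _ ≤ X (q + 1) - X p := by linarith [hstep q]

theorem dist_le_dist_of_norm_sub_succ_le (hstep : ∀ p, ‖x (p + 1) - x p‖ ≤ X (p + 1) - X p)
    (p q : ℕ) : dist (x p) (x q) ≤ dist (X p) (X q) := by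
  rw [dist_eq_norm, Real.dist_eq]
  rcases le_total p q with hpq | hqp
  · rw [norm_sub_rev, abs_sub_comm]
    exact (norm_sub_le_sub_of_norm_sub_succ_le hstep hpq).trans (le_abs_self _)
  · exact (norm_sub_le_sub_of_norm_sub_succ_le hstep hqp).trans (le_abs_self _)

theorem norm_sub_le_sub_of_tendsto (hstep : ∀ p, ‖x (p + 1) - x p‖ ≤ X (p + 1) - X p)
    {xs : E} {Xs : ℝ} (hx : Tendsto x atTop (𝓝 xs)) (hX : Tendsto X atTop (𝓝 Xs)) (p : ℕ) :
    ‖xs - x p‖ ≤ Xs - X p :=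
  le_of_tendsto_of_tendsto ((hx.sub_const (x p)).norm) (hX.sub_const (X p))
    (eventually_atTop.2 ⟨p, fun _ hq => norm_sub_le_sub_of_norm_sub_succ_le hstep hq⟩)

end Telescoping

section Majorant

variable {E : Type*} [NormedAddCommGroup E] {Xt : ℝ} {F : ℝ → ℝ} {f : E → E}

theorem norm_iterate_le_and_norm_sub_succ_le (hX : ∀ p, F^[p] 0 ∈ Icc 0 Xt)
    (hmono : Monotone fun p => F^[p] 0) (hf0 : ‖f 0‖ ≤ F 0)
    (hlip : ∀ (x h : E) (X H : ℝ), ‖x‖ ≤ X → ‖h‖ ≤ H → 0 ≤ X → 0 ≤ H →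
      X + H ≤ Xt → ‖f (x + h) - f x‖ ≤ F (X + H) - F X) (p : ℕ) :
    ‖f^[p] 0‖ ≤ F^[p] 0 ∧ ‖f^[p + 1] 0 - f^[p] 0‖ ≤ F^[p + 1] 0 - F^[p] 0 := by
  induction p with
  | zero => simpa using hf0
  | succ p ih =>
    obtain ⟨hnorm, hstep⟩ := ih
    have hnorm' : ‖f^[p + 1] 0‖ ≤ F^[p + 1] 0 := by
      calc ‖f^[p + 1] 0‖ = ‖f^[p] 0 + (f^[p + 1] 0 - f^[p] 0)‖ := by rw [add_sub_cancel]
        _ ≤ ‖f^[p] 0‖ + ‖f^[p + 1] 0 - f^[p] 0‖ := norm_add_le _ _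
        _ ≤ F^[p + 1] 0 := by linarith
    refine ⟨hnorm', ?_⟩
    have h := hlip _ _ _ _ hnorm hstep (hX p).1 (sub_nonneg.2 (hmono p.le_succ))
      (by rw [add_sub_cancel]; exact (hX (p + 1)).2)
    simpa only [add_sub_cancel, ← iterate_succ_apply' f, ← iterate_succ_apply' F] using h

end Majorant

theorem stmt_11_general {E : Type*} [NormedAddCommGroup E] [CompleteSpace E]
    (Xt : ℝ) (hXt : 0 ≤ Xt) (F : ℝ → ℝ)
    (hiso : ∀ a b : ℝ, 0 ≤ a → a ≤ b → b ≤ Xt → F a ≤ F b)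
    (hF0 : 0 ≤ F 0)
    (hFXt : F Xt ≤ Xt)
    (hcont : ∀ (t : ℕ → ℝ) (L : ℝ), Monotone t → (∀ p, t p ∈ Set.Icc 0 Xt) →
      Tendsto t atTop (nhds L) → Tendsto (fun p => F (t p)) atTop (nhds (F L)))
    (f : E → E)
    (hf0 : ‖f 0‖ ≤ F 0)
    (hlip : ∀ (x h : E) (X H : ℝ), ‖x‖ ≤ X → ‖h‖ ≤ H → 0 ≤ X → 0 ≤ H →
      X + H ≤ Xt → ‖f (x + h) - f x‖ ≤ F (X + H) - F X) :
    Monotone (fun p => F^[p] 0) ∧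
    ∃ Xstar : ℝ, Xstar ∈ Set.Icc 0 Xt ∧
      Tendsto (fun p => F^[p] 0) atTop (nhds Xstar) ∧ F Xstar = Xstar ∧
      ∃ xstar : E, Tendsto (fun p => f^[p] 0) atTop (nhds xstar) ∧
        f xstar = xstar ∧ ‖xstar‖ ≤ Xstar := by
  have hFmono : MonotoneOn F (Icc 0 Xt) := fun a ha b hb hab => hiso a b ha.1 hab hb.2
  have hmaps : MapsTo F (Icc 0 Xt) (Icc 0 Xt) :=
    hFmono.mapsTo_Icc.mono_right (Icc_subset_Icc hF0 hFXt)
  have hX : ∀ p, F^[p] 0 ∈ Icc 0 Xt := fun p => hmaps.iterate p ⟨le_rfl, hXt⟩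
  have hmono := hFmono.monotone_iterate_of_le_map hmaps ⟨le_rfl, hXt⟩ hF0
  have hXconv := tendsto_atTop_ciSup hmono ⟨Xt, forall_mem_range.2 fun p => (hX p).2⟩
  set Xs := ⨆ p, F^[p] 0
  have hXfix : F Xs = Xs :=
    isFixedPt_of_tendsto_iterate_of_tendsto_map hXconv (hcont _ _ hmono hX hXconv)
  have hXs : Xs ∈ Icc 0 Xt := isClosed_Icc.mem_of_tendsto hXconv (.of_forall hX)
  have hnorm p := (norm_iterate_le_and_norm_sub_succ_le hX hmono hf0 hlip p).1
  have hstep p := (norm_iterate_le_and_norm_sub_succ_le hX hmono hf0 hlip p).2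
  obtain ⟨xs, hxconv⟩ := cauchySeq_tendsto_of_complete
    (cauchySeq_of_dist_le_dist (dist_le_dist_of_norm_sub_succ_le (x := fun p => f^[p] 0) hstep)
      hXconv.cauchySeq)
  have hgap p : ‖f (f^[p] 0) - f xs‖ ≤ Xs - F^[p + 1] 0 := by
    have h := hlip _ _ _ _ (hnorm p) (norm_sub_le_sub_of_tendsto hstep hxconv hXconv p) (hX p).1
      (sub_nonneg.2 (hmono.ge_of_tendsto hXconv p)) (by rw [add_sub_cancel]; exact hXs.2)
    rw [norm_sub_rev]
    simpa only [add_sub_cancel, hXfix, ← iterate_succ_apply' F] using h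
  have hgap_lim : Tendsto (fun p => Xs - F^[p + 1] 0) atTop (𝓝 0) := by
    simpa using ((tendsto_add_atTop_iff_nat 1).2 hXconv).const_sub Xs
  have hfconv : Tendsto (fun p => f (f^[p] 0)) atTop (𝓝 (f xs)) :=
    tendsto_iff_norm_sub_tendsto_zero.2 (squeeze_zero (fun _ => norm_nonneg _) hgap hgap_lim)
  exact ⟨hmono, Xs, hXs, hXconv, hXfix, xs, hxconv,
    isFixedPt_of_tendsto_iterate_of_tendsto_map hxconv hfconv,
    le_of_tendsto_of_tendsto' hxconv.norm hXconv hnorm⟩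

/-- Kantorovich's method of successive approximation in a real Banach space with a
real comparison function `F`: the comparison iterates increase to a fixed point
`X* ∈ [0, X̃]` of `F` and the iterates of `f` converge in norm to a fixed point
`x*` of `f` with `‖x*‖ ≤ X*`. -/
theorem stmt_11 {E : Type*} [NormedAddCommGroup E] [NormedSpace ℝ E] [CompleteSpace E]
    (Xt : ℝ) (hXt : 0 ≤ Xt) (F : ℝ → ℝ)
    (hiso : ∀ a b : ℝ, 0 ≤ a → a ≤ b → b ≤ Xt → F a ≤ F b)
    (hF0 : 0 ≤ F 0)
    (hFXt : F Xt ≤ Xt)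
    (hcont : ∀ (t : ℕ → ℝ) (L : ℝ), Monotone t → (∀ p, t p ∈ Set.Icc 0 Xt) →
      Tendsto t atTop (nhds L) → Tendsto (fun p => F (t p)) atTop (nhds (F L)))
    (f : E → E)
    (hf0 : ‖f 0‖ ≤ F 0)
    (hlip : ∀ (x h : E) (X H : ℝ), ‖x‖ ≤ X → ‖h‖ ≤ H → 0 ≤ X → 0 ≤ H →
      X + H ≤ Xt → ‖f (x + h) - f x‖ ≤ F (X + H) - F X) :
    Monotone (fun p => F^[p] 0) ∧
    ∃ Xstar : ℝ, Xstar ∈ Set.Icc 0 Xt ∧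
      Tendsto (fun p => F^[p] 0) atTop (nhds Xstar) ∧ F Xstar = Xstar ∧
      ∃ xstar : E, Tendsto (fun p => f^[p] 0) atTop (nhds xstar) ∧
        f xstar = xstar ∧ ‖xstar‖ ≤ Xstar :=
  stmt_11_general Xt hXt F hiso hF0 hFXt hcont f hf0 hlip
end

section
/- Let E and F be real Banach spaces and let Ψ : ℝ → ℝ → ℝ satisfy: (i) Ψ is isotone on the nonnegative quadrant (0 ≤ X ≤ X' and 0 ≤ Y ≤ Y' imply Ψ(X,Y) ≤ Ψ(X',Y')); (ii) Ψ(0,0) ≥ 0; (iii) for every X ≥ 0 and every monotone increasing sequence (Y_p) of nonnegative reals converging to L, Ψ(X, Y_p) converges to Ψ(X, L). Let ψ : E × F → F satisfy: ‖ψ(x,y)‖ ≤ Ψ(X,Y) whenever ‖x‖ ≤ X, ‖y‖ ≤ Y, 0 ≤ X, 0 ≤ Y; and ‖ψ(x, y+k) − ψ(x,y)‖ ≤ Ψ(X, Y+K) − Ψ(X,Y) whenever ‖x‖ ≤ X, ‖y‖ ≤ Y, ‖k‖ ≤ K, 0 ≤ X, 0 ≤ Y, 0 ≤ K. Fix X ≥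 0 such that there exists Ỹ ≥ 0 with Ψ(X, Ỹ) ≤ Ỹ, and let Y*(X) be the limit of the iterates Y^(0) = 0, Y^(p+1) = Ψ(X, Y^(p)). Then for every x ∈ E with ‖x‖ ≤ X, the iterates y^(0) = 0, y^(p+1) = ψ(x, y^(p)) converge in norm to some y* ∈ F with ψ(x, y*) = y* and ‖y*‖ ≤ Y*(X). -/
open Filter

/-- The implicit function theorem under Kantorovich conditions: if `ψ : E × F → F`
is majorized by `Ψ : ℝ → ℝ → ℝ` in the sense of M2'–M4', and for `X ≥ 0` some
`Ỹ ≥ 0` satisfies `Ψ(X, Ỹ) ≤ Ỹ`, then, denoting by `Y*(X)` the limit of the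
iterates `Y⁽⁰⁾ = 0`, `Y⁽ᵖ⁺¹⁾ = Ψ(X, Y⁽ᵖ⁾)`, for every `x` with `‖x‖ ≤ X` the
iterates `y⁽⁰⁾ = 0`, `y⁽ᵖ⁺¹⁾ = ψ(x, y⁽ᵖ⁾)` converge in norm to a solution `y*` of
`y = ψ(x, y)` with `‖y*‖ ≤ Y*(X)`. -/
theorem stmt_14 {E F : Type*}
    [NormedAddCommGroup E] [NormedSpace ℝ E] [CompleteSpace E]
    [NormedAddCommGroup F] [NormedSpace ℝ F] [CompleteSpace F]
    (Ψ : ℝ → ℝ → ℝ)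
    (hiso : ∀ X X' Y Y' : ℝ, 0 ≤ X → X ≤ X' → 0 ≤ Y → Y ≤ Y' → Ψ X Y ≤ Ψ X' Y')
    (h00 : 0 ≤ Ψ 0 0)
    (hcont : ∀ (X : ℝ), 0 ≤ X → ∀ (Yp : ℕ → ℝ) (L : ℝ), Monotone Yp →
      (∀ p, 0 ≤ Yp p) → Tendsto Yp atTop (nhds L) →
      Tendsto (fun p => Ψ X (Yp p)) atTop (nhds (Ψ X L)))
    (ψ : E × F → F)
    (hbound : ∀ (x : E) (y : F) (X Y : ℝ), ‖x‖ ≤ X → ‖y‖ ≤ Y → 0 ≤ X → 0 ≤ Y →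
      ‖ψ (x, y)‖ ≤ Ψ X Y)
    (hlip : ∀ (x : E) (y k : F) (X Y K : ℝ), ‖x‖ ≤ X → ‖y‖ ≤ Y → ‖k‖ ≤ K →
      0 ≤ X → 0 ≤ Y → 0 ≤ K → ‖ψ (x, y + k) - ψ (x, y)‖ ≤ Ψ X (Y + K) - Ψ X Y)
    (X : ℝ) (hX : 0 ≤ X)
    (Yt : ℝ) (hYt : 0 ≤ Yt) (hYtfix : Ψ X Yt ≤ Yt)
    (Ystar : ℝ) (hYstar : Tendsto (fun p => (Ψ X)^[p] 0) atTop (nhds Ystar))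
    (x : E) (hx : ‖x‖ ≤ X) :
    ∃ ystar : F, Tendsto (fun p => (fun y => ψ (x, y))^[p] 0) atTop (nhds ystar) ∧
      ψ (x, ystar) = ystar ∧ ‖ystar‖ ≤ Ystar := by

  set Yseq : ℕ → ℝ := fun p => (Ψ X)^[p] 0 with hYseqdef
  set yseq : ℕ → F := fun p => (fun y => ψ (x, y))^[p] 0 with hyseqdef
  have hYsucc : ∀ p, Yseq (p+1) = Ψ X (Yseq p) := fun p => Function.iterate_succ_apply' _ _ _
  have hysucc : ∀ p, yseq (p+1) = ψ (x, yseq p) := fun p => Function.iterate_succ_apply' _ _ _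
  have hY0 : Yseq 0 = 0 := rfl
  have hy0 : yseq 0 = 0 := rfl
  have hYnn : ∀ p, 0 ≤ Yseq p := by
    intro p
    induction p with
    | zero => simp [hY0]
    | succ p ih =>
      rw [hYsucc]
      calc (0:ℝ) ≤ Ψ 0 0 := h00
        _ ≤ Ψ X (Yseq p) := hiso 0 X 0 (Yseq p) le_rfl hX le_rfl ih
  have hYmono : Monotone Yseq := by
    apply monotone_nat_of_le_succ
    intro p
    induction p with
    | zero =>
      rw [hYsucc, hY0]
      calc (0:ℝ) ≤ Ψ 0 0 := h00
        _ ≤ Ψ X 0 := hiso 0 X 0 0 le_rfl hX le_rfl le_rfl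
    | succ p ih =>
      calc Yseq (p+1) = Ψ X (Yseq p) := hYsucc p
        _ ≤ Ψ X (Yseq (p+1)) := hiso X X (Yseq p) (Yseq (p+1)) hX le_rfl (hYnn p) ih
        _ = Yseq (p+2) := (hYsucc (p+1)).symm
  have hYleStar : ∀ p, Yseq p ≤ Ystar := fun p => hYmono.ge_of_tendsto hYstar p
  have hynorm : ∀ p, ‖yseq p‖ ≤ Yseq p := by
    intro p
    induction p with
    | zero => simp [hy0, hY0]
    | succ p ih =>
      rw [hysucc, hYsucc]
      exact hbound x (yseq p) X (Yseq p) hx ih hX (hYnn p)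
  have hdiff : ∀ p, ‖yseq (p+1) - yseq p‖ ≤ Yseq (p+1) - Yseq p := by
    intro p
    induction p with
    | zero =>
      rw [hysucc, hy0, hYsucc, hY0, sub_zero, sub_zero]
      exact hbound x 0 X 0 hx (by simp) hX le_rfl
    | succ p ih =>
      have hK : (0:ℝ) ≤ Yseq (p+1) - Yseq p := sub_nonneg.mpr (hYmono (Nat.le_succ p))
      have hknorm : ‖yseq (p+1) - yseq p‖ ≤ Yseq (p+1) - Yseq p := ih
      have h := hlip x (yseq p) (yseq (p+1) - yseq p) X (Yseq p) (Yseq (p+1) - Yseq p)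
        hx (hynorm p) hknorm hX (hYnn p) hK
      have e1 : yseq p + (yseq (p+1) - yseq p) = yseq (p+1) := by abel
      have e2 : Yseq p + (Yseq (p+1) - Yseq p) = Yseq (p+1) := by ring
      rw [e1, e2] at h
      rw [← hysucc (p+1), ← hYsucc (p+1), ← hysucc p, ← hYsucc p] at h
      exact h
  have hgap : ∀ p q, p ≤ q → ‖yseq q - yseq p‖ ≤ Yseq q - Yseq p := by
    intro p q hpq
    induction q, hpq using Nat.le_induction with
    | base => simp
    | succ q hpq ih =>
      calc ‖yseq (q+1) - yseq p‖
          ≤ ‖yseq (q+1) - yseq q‖ + ‖yseq q - yseq p‖ := norm_sub_le_norm_sub_add_norm_sub _ _ _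
        _ ≤ (Yseq (q+1) - Yseq q) + (Yseq q - Yseq p) := add_le_add (hdiff q) ih
        _ = Yseq (q+1) - Yseq p := by ring
  have hcauchy : CauchySeq yseq := by
    apply cauchySeq_of_le_tendsto_0 (fun N => Ystar - Yseq N)
    · intro n m N hn hm
      rcases le_total n m with h | h
      · rw [dist_eq_norm, norm_sub_rev]
        calc ‖yseq m - yseq n‖ ≤ Yseq m - Yseq n := hgap n m h
          _ ≤ Ystar - Yseq N := by
              have := hYleStar m; have := hYmono hn; linarith
      · rw [dist_eq_norm]
        calc ‖yseq n - yseq m‖ ≤ Yseq n - Yseq m := hgap m n h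
          _ ≤ Ystar - Yseq N := by
              have := hYleStar n; have := hYmono hm; linarith
    · have : Tendsto (fun N => Ystar - Yseq N) atTop (nhds (Ystar - Ystar)) :=
        tendsto_const_nhds.sub hYstar
      simpa using this
  obtain ⟨ystar, hty⟩ := cauchySeq_tendsto_of_complete hcauchy
  refine ⟨ystar, hty, ?_, ?_⟩
  · -- fixed point
    have hstargap : ∀ p, ‖ystar - yseq p‖ ≤ Ystar - Yseq p := by
      intro p
      have hlim : Tendsto (fun q => ‖yseq q - yseq p‖) atTop (nhds ‖ystar - yseq p‖) :=
        ((hty.sub tendsto_const_nhds).norm)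
      refine le_of_tendsto hlim ?_
      filter_upwards [eventually_ge_atTop p] with q hq
      calc ‖yseq q - yseq p‖ ≤ Yseq q - Yseq p := hgap p q hq
        _ ≤ Ystar - Yseq p := by have := hYleStar q; linarith
    have hPsiTend : Tendsto (fun p => Ψ X (Yseq p)) atTop (nhds (Ψ X Ystar)) :=
      hcont X hX Yseq Ystar hYmono hYnn hYstar
    have hbnd : ∀ p, ‖yseq (p+1) - ψ (x, ystar)‖ ≤ Ψ X Ystar - Ψ X (Yseq p) := by
      intro p
      have hK : (0:ℝ) ≤ Ystar - Yseq p := by have := hYleStar p; linarith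
      have h := hlip x (yseq p) (ystar - yseq p) X (Yseq p) (Ystar - Yseq p)
        hx (hynorm p) (hstargap p) hX (hYnn p) hK
      have e1 : yseq p + (ystar - yseq p) = ystar := by abel
      have e2 : Yseq p + (Ystar - Yseq p) = Ystar := by ring
      rw [e1, e2] at h
      rw [hysucc p, norm_sub_rev]
      exact h
    have htend0 : Tendsto (fun p => ‖yseq (p+1) - ψ (x, ystar)‖) atTop (nhds 0) := by
      have hb : Tendsto (fun p => Ψ X Ystar - Ψ X (Yseq p)) atTop (nhds 0) := by
        have : Tendsto (fun p => Ψ X Ystar - Ψ X (Yseq p)) atTop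
            (nhds (Ψ X Ystar - Ψ X Ystar)) := tendsto_const_nhds.sub hPsiTend
        simpa using this
      exact squeeze_zero (fun p => norm_nonneg _) hbnd hb
    have h1 : Tendsto (fun p => yseq (p+1)) atTop (nhds (ψ (x, ystar))) :=
      tendsto_iff_norm_sub_tendsto_zero.mpr htend0
    have h2 : Tendsto (fun p => yseq (p+1)) atTop (nhds ystar) :=
      hty.comp (tendsto_add_atTop_nat 1)
    exact (tendsto_nhds_unique h1 h2)
  · refine le_of_tendsto hty.norm ?_
    filter_upwards with p
    exact (hynorm p).trans (hYleStar p)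
end

section
/- Let E be a Dedekind σ-complete vector lattice, let X̃ ∈ E with X̃ ≥ 0, and let F : E → E satisfy: (i) F is isotone on the order interval ⟨0, X̃⟩; (ii) F(0) ≥ 0; (iii) F(X̃) ≤ X̃; (iv) whenever (X_p) is a monotone increasing sequence in ⟨0, X̃⟩ whose range has least upper bound L, the range of (F(X_p)) has least upper bound F(L). Let f : E → E satisfy |f(0)| ≤ F(0), and |f(x+h) − f(x)| ≤ F(X+H) − F(X) whenever |x| ≤ X, |h| ≤ H, 0 ≤ X, 0 ≤ H and X + H ≤ X̃. Define X^(0) = 0, X^(p+1) = F(X^(p)) and x^(0) = 0, x^(p+1) = f(x^(p)). Then (X^(p)) is monotone increasing with least upper bound X* ∈ ⟨0, X̃⟩ satisfying F(X*) = X*, and (x^(p)) order-converges to some x* ∈ E with f(x*) = x* and |x*| ≤ X*. -/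
/-- Kantorovich's successive approximation theorem in a Dedekind σ-complete vector
lattice: the comparison iterates `X⁽ᵖ⁾` increase to a fixed point `X* ∈ ⟨0, X̃⟩` of
`F`, and the iterates `x⁽ᵖ⁾` of the majorized map `f` order-converge to a fixed
point `x*` of `f` with `|x*| ≤ X*`. -/
theorem stmt_17 {E : Type*} [Lattice E] [AddCommGroup E] [Module ℝ E]
    [CovariantClass E E (· + ·) (· ≤ ·)]
    (hsmul : ∀ (c : ℝ) (v : E), 0 ≤ c → 0 ≤ v → 0 ≤ c • v)
    (hDed : ∀ f : ℕ → E, Monotone f → BddAbove (Set.range f) →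
      ∃ l, IsLUB (Set.range f) l)
    (Xt : E) (hXt : 0 ≤ Xt) (F : E → E)
    (hiso : ∀ X X' : E, 0 ≤ X → X ≤ X' → X' ≤ Xt → F X ≤ F X')
    (hF0 : 0 ≤ F 0)
    (hFXt : F Xt ≤ Xt)
    (hcont : ∀ (Xs : ℕ → E) (L : E), Monotone Xs → (∀ p, Xs p ∈ Set.Icc 0 Xt) →
      IsLUB (Set.range Xs) L → IsLUB (Set.range fun p => F (Xs p)) (F L))
    (f : E → E)
    (hf0 : |f 0| ≤ F 0)
    (hlip : ∀ x h X H : E, |x| ≤ X → |h| ≤ H → 0 ≤ X → 0 ≤ H → X + H ≤ Xt →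
      |f (x + h) - f x| ≤ F (X + H) - F X) :
    Monotone (fun p => F^[p] 0) ∧
    ∃ Xstar : E, IsLUB (Set.range fun p => F^[p] 0) Xstar ∧
      Xstar ∈ Set.Icc 0 Xt ∧ F Xstar = Xstar ∧
      ∃ xstar : E, OrderConv (fun p => f^[p] 0) xstar ∧
        f xstar = xstar ∧ |xstar| ≤ Xstar := by
  set Xp : ℕ → E := fun p => F^[p] 0 with hXpdef
  set xp : ℕ → E := fun p => f^[p] 0 with hxpdef
  have hXs : ∀ p, Xp (p + 1) = F (Xp p) := fun p => Function.iterate_succ_apply' F p 0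
  have hxs : ∀ p, xp (p + 1) = f (xp p) := fun p => Function.iterate_succ_apply' f p 0
  have hX0 : Xp 0 = 0 := rfl
  have hx0 : xp 0 = 0 := rfl
  -- bounds on Xp
  have hbnds : ∀ p, 0 ≤ Xp p ∧ Xp p ≤ Xt := by
    intro p
    induction p with
    | zero => exact ⟨le_rfl, hXt⟩
    | succ p ih =>
      rw [hXs]
      exact ⟨le_trans hF0 (hiso 0 (Xp p) le_rfl ih.1 ih.2),
        le_trans (hiso (Xp p) Xt ih.1 ih.2 le_rfl) hFXt⟩
  -- monotonicity of Xp
  have hstep : ∀ p, Xp p ≤ Xp (p + 1) := by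
    intro p
    induction p with
    | zero => rw [hXs]; exact hF0
    | succ p ih =>
      rw [hXs, hXs]
      exact hiso (Xp p) (Xp (p + 1)) (hbnds p).1 ih (hbnds (p + 1)).2
  have hmono : Monotone Xp := monotone_nat_of_le_succ hstep
  refine ⟨hmono, ?_⟩
  obtain ⟨Xstar, hXstar⟩ := hDed Xp hmono ⟨Xt, by rintro _ ⟨p, rfl⟩; exact (hbnds p).2⟩
  have hXpleXstar : ∀ p, Xp p ≤ Xstar := fun p => hXstar.1 ⟨p, rfl⟩
  have hXstarIcc : Xstar ∈ Set.Icc 0 Xt := by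
    refine ⟨le_trans (hbnds 0).1 (hXpleXstar 0), ?_⟩
    exact hXstar.2 (by rintro _ ⟨p, rfl⟩; exact (hbnds p).2)
  -- fixed point of F
  have hlub2 : IsLUB (Set.range fun p => Xp (p + 1)) Xstar := by
    constructor
    · rintro _ ⟨p, rfl⟩; exact hXpleXstar (p + 1)
    · intro b hb
      refine hXstar.2 ?_
      rintro _ ⟨p, rfl⟩
      exact le_trans (hmono (Nat.le_succ p)) (hb ⟨p, rfl⟩)
  have hfix : F Xstar = Xstar := by
    have hc := hcont Xp Xstar hmono (fun p => ⟨(hbnds p).1, (hbnds p).2⟩) hXstar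
    have hre : (Set.range fun p => F (Xp p)) = Set.range fun p => Xp (p + 1) := by
      apply congrArg
      funext p
      exact (hXs p).symm
    rw [hre] at hc
    exact hc.unique hlub2
  refine ⟨Xstar, hXstar, hXstarIcc, hfix, ?_⟩
  -- estimates on xp
  have hd : ∀ p, |xp (p + 1) - xp p| ≤ Xp (p + 1) - Xp p ∧ |xp p| ≤ Xp p := by
    intro p
    induction p with
    | zero =>
      constructor
      · rw [hxs, hXs, hx0, hX0, sub_zero, sub_zero]; exact hf0
      · rw [hx0, hX0, abs_zero]
    | succ p ih =>
      have hH : (0:E) ≤ Xp (p + 1) - Xp p := sub_nonneg.2 (hstep p)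
      have habs : |xp (p + 1)| ≤ Xp (p + 1) := by
        have : xp (p + 1) = xp p + (xp (p + 1) - xp p) := by abel
        rw [this]
        calc |xp p + (xp (p + 1) - xp p)| ≤ |xp p| + |xp (p + 1) - xp p| := abs_add_le _ _
          _ ≤ Xp p + (Xp (p + 1) - Xp p) := add_le_add ih.2 ih.1
          _ = Xp (p + 1) := by abel
      refine ⟨?_, habs⟩
      have hsum : Xp p + (Xp (p + 1) - Xp p) = Xp (p + 1) := by abel
      have hl := hlip (xp p) (xp (p + 1) - xp p) (Xp p) (Xp (p + 1) - Xp p)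
        ih.2 ih.1 (hbnds p).1 hH (by rw [hsum]; exact (hbnds (p + 1)).2)
      rw [add_sub_cancel, hsum, ← hxs p, ← hXs p] at hl
      rw [hxs (p + 1), hXs (p + 1)]
      exact hl
  -- general difference estimate
  have hgen : ∀ p q, p ≤ q → |xp q - xp p| ≤ Xp q - Xp p := by
    intro p q h
    induction q, h using Nat.le_induction with
    | base => simp
    | succ q hq ih =>
      have : xp (q + 1) - xp p = (xp (q + 1) - xp q) + (xp q - xp p) := by abel
      rw [this]
      calc |(xp (q + 1) - xp q) + (xp q - xp p)|
          ≤ |xp (q + 1) - xp q| + |xp q - xp p| := abs_add_le _ _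
        _ ≤ (Xp (q + 1) - Xp q) + (Xp q - Xp p) := add_le_add (hd q).1 ih
        _ = Xp (q + 1) - Xp p := by abel
  -- the error sequence
  set ε : ℕ → E := fun p => Xstar - Xp p with hεdef
  have hεanti : Antitone ε := fun p q h => sub_le_sub_left (hmono h) _
  have hεnn : ∀ p, (0:E) ≤ ε p := fun p => sub_nonneg.2 (hXpleXstar p)
  have hεglb : IsGLB (Set.range ε) 0 := by
    constructor
    · rintro _ ⟨p, rfl⟩; exact hεnn p
    · intro b hb
      have h1 : ∀ p, Xp p ≤ Xstar - b := by
        intro p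
        have := hb ⟨p, rfl⟩
        simpa [hεdef] using le_sub_comm.1 this
      have h2 : Xstar ≤ Xstar - b := hXstar.2 (by rintro _ ⟨p, rfl⟩; exact h1 p)
      have := sub_le_sub_left h2 Xstar
      simpa using this
  -- the auxiliary monotone sequence
  set u : ℕ → E := fun p => xp p - ε p with hudef
  have humono : Monotone u := by
    apply monotone_nat_of_le_succ
    intro p
    have h1 : -(Xp (p + 1) - Xp p) ≤ xp (p + 1) - xp p := neg_le.1 (abs_le'.1 (hd p).1).2
    rw [← sub_nonneg]
    have heq : u (p + 1) - u p = (xp (p + 1) - xp p) + (Xp (p + 1) - Xp p) := by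
      simp only [hudef, hεdef]; abel
    rw [heq]
    rw [← sub_nonneg, sub_neg_eq_add] at h1
    exact h1
  have hubdd : BddAbove (Set.range u) := by
    refine ⟨Xstar, ?_⟩
    rintro _ ⟨p, rfl⟩
    calc u p ≤ xp p := by simpa [hudef] using sub_le_self (xp p) (hεnn p)
      _ ≤ |xp p| := le_abs_self _
      _ ≤ Xp p := (hd p).2
      _ ≤ Xstar := hXpleXstar p
  obtain ⟨xstar, hxlub⟩ := hDed u humono hubdd
  -- the key convergence estimate
  have hkey : ∀ q, |xp q - xstar| ≤ ε q := by
    intro q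
    have hlo : xp q - xstar ≤ ε q := by
      have h : xp q - ε q ≤ xstar := hxlub.1 ⟨q, rfl⟩
      exact sub_le_comm.1 h
    have hhi : xstar ≤ xp q + ε q := by
      refine hxlub.2 ?_
      rintro _ ⟨p, rfl⟩
      show xp p - ε p ≤ xp q + ε q
      rcases le_total p q with h | h
      · have h1 : xp p - xp q ≤ ε p := by
          calc xp p - xp q ≤ |xp p - xp q| := le_abs_self _
            _ = |xp q - xp p| := abs_sub_comm _ _
            _ ≤ Xp q - Xp p := hgen p q h
            _ ≤ Xstar - Xp p := sub_le_sub_right (hXpleXstar q) _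
        calc xp p - ε p ≤ xp q := sub_le_comm.1 h1
          _ ≤ xp q + ε q := le_add_of_nonneg_right (hεnn q)
      · have h1 : xp p - xp q ≤ ε q := by
          calc xp p - xp q ≤ |xp p - xp q| := le_abs_self _
            _ ≤ Xp p - Xp q := hgen q p h
            _ ≤ Xstar - Xp q := sub_le_sub_right (hXpleXstar p) _
        calc xp p - ε p ≤ xp p := sub_le_self _ (hεnn p)
          _ ≤ ε q + xp q := sub_le_iff_le_add.1 h1
          _ = xp q + ε q := add_comm _ _
    exact abs_le'.2 ⟨hlo, by
      rw [neg_sub]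
      exact sub_le_iff_le_add.2 (hhi.trans_eq (add_comm _ _))⟩
  -- fixed point of f
  have hfx : f xstar = xstar := by
    have hbound : ∀ p, |f xstar - xstar| ≤ ε p + ε p := by
      intro p
      have h1 : |f xstar - xp (p + 1)| ≤ ε (p + 1) := by
        have hsum : Xp p + ε p = Xstar := by simp [hεdef]
        have hl := hlip (xp p) (xstar - xp p) (Xp p) (ε p)
          (hd p).2 (by rw [abs_sub_comm]; exact hkey p) (hbnds p).1 (hεnn p)
          (by rw [hsum]; exact hXstarIcc.2)
        rw [add_sub_cancel, hsum, hfix] at hl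
        rw [hxs p]
        simpa [hεdef, hXs p] using hl
      have h2 : |xp (p + 1) - xstar| ≤ ε (p + 1) := hkey (p + 1)
      have : f xstar - xstar = (f xstar - xp (p + 1)) + (xp (p + 1) - xstar) := by abel
      rw [this]
      calc |(f xstar - xp (p + 1)) + (xp (p + 1) - xstar)|
          ≤ |f xstar - xp (p + 1)| + |xp (p + 1) - xstar| := abs_add_le _ _
        _ ≤ ε (p + 1) + ε (p + 1) := add_le_add h1 h2
        _ ≤ ε p + ε p := add_le_add (hεanti (Nat.le_succ p)) (hεanti (Nat.le_succ p))
    set a : E := |f xstar - xstar| with hadef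
    have hhalf : ∀ p, (2⁻¹ : ℝ) • a ≤ ε p := by
      intro p
      have h0 : (0:E) ≤ ε p + ε p - a := sub_nonneg.2 (hbound p)
      have h1 : (0:E) ≤ (2⁻¹ : ℝ) • (ε p + ε p - a) := hsmul _ _ (by norm_num) h0
      have h2 : (2⁻¹ : ℝ) • (ε p + ε p) = ε p := by
        rw [← two_smul ℝ (ε p), smul_smul]
        norm_num
      rw [smul_sub, h2, sub_nonneg] at h1
      exact h1
    have hle0 : (2⁻¹ : ℝ) • a ≤ 0 := hεglb.2 (by rintro _ ⟨p, rfl⟩; exact hhalf p)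
    have hge0 : (0:E) ≤ (2⁻¹ : ℝ) • a := hsmul _ _ (by norm_num) (abs_nonneg _)
    have ha0 : a = 0 := by
      have h : (2⁻¹ : ℝ) • a = 0 := le_antisymm hle0 hge0
      have := congrArg (fun v => (2 : ℝ) • v) h
      simpa [smul_smul] using this
    have hsub : f xstar - xstar = 0 := by
      have h1 : f xstar - xstar ≤ 0 := le_trans (le_abs_self _) ha0.le
      have h2 : -(f xstar - xstar) ≤ 0 := le_trans (neg_le_abs _) ha0.le
      have h2' : (0:E) ≤ f xstar - xstar := neg_nonpos.1 h2
      exact le_antisymm h1 h2'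
    exact sub_eq_zero.1 hsub
  refine ⟨xstar, ⟨ε, hεanti, hεglb, hkey⟩, hfx, ?_⟩
  have h := hkey 0
  rw [hx0, zero_sub, abs_neg] at h
  simpa [hεdef, hX0, sub_zero] using h
end

section
/- (Hille-type implicit function theorem.) Let a : ℕ → ℕ → ℂ satisfy a(0,0) = 0 and a(0,1) = 0, and suppose that for all real X ≥ 0 and Y ≥ 0 the family (m,n) ↦ ‖a(m,n)‖·X^m·Y^n is summable over ℕ × ℕ. Define ψ(x,y) = ∑_{(m,n)} a(m,n)·x^m·y^n for x, y ∈ ℂ and Ψ(X,Y) = ∑_{(m,n)} ‖a(m,n)‖·X^m·Y^n for X, Y ≥ 0. Suppose X* > 0 and Y* ≥ 0 satisfy Ψ(X*, Y*) ≤ Y*. Then there exists a function φ : ℂ → ℂ that is analytic on the open ball {x : ‖x‖ < X*}, with φ(0) = 0, such that for every x with ‖x‖ < X*: φ(x) = ψ(x, φ(x)) and ‖φ(x)‖ ≤ Y*. -/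
open scoped BigOperators

/-- The double power series `ψ(x, y) = ∑ a(m,n) xᵐ yⁿ`. -/
noncomputable def psiFun (a : ℕ → ℕ → ℂ) (x y : ℂ) : ℂ :=
  ∑' mn : ℕ × ℕ, a mn.1 mn.2 * x ^ mn.1 * y ^ mn.2

/-- The comparison (majorant) series `Ψ(X, Y) = ∑ ‖a(m,n)‖ Xᵐ Yⁿ`. -/
noncomputable def PsiFun (a : ℕ → ℕ → ℂ) (X Y : ℝ) : ℝ :=
  ∑' mn : ℕ × ℕ, ‖a mn.1 mn.2‖ * X ^ mn.1 * Y ^ mn.2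

/-!
The Picard iterates `φ₀ = 0`, `φₖ₊₁(x) = ψ(x, φₖ(x))` are dominated by the real iterates
`Y₀ = 0`, `Yₖ₊₁ = Ψ(X*, Yₖ)`: comparing the series coefficientwise gives
`‖φₖ₊₁(x) - φₖ(x)‖ ≤ Yₖ₊₁ - Yₖ` for `‖x‖ < X*`. As `Ψ(X*, ·)` is monotone on `[0, ∞)` and
`Ψ(X*, Y*) ≤ Y*`, the `Yₖ` increase and stay below `Y*`, so by the Weierstrass M-test the `φₖ`
converge uniformly on the ball. The limit is holomorphic, hence analytic, bounded by `Y*`, and a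
fixed point of `ψ(x, ·)` because `ψ(x, ·)` is continuous.
-/

open Filter Set Metric Topology

lemma summable_sub_succ_of_monotone {v : ℕ → ℝ} (hv : Monotone v) (hbdd : BddAbove (range v)) :
    Summable fun n => v (n + 1) - v n := by
  obtain ⟨c, hc⟩ := hbdd
  refine summable_of_sum_range_le (c := c - v 0) (fun n => sub_nonneg.2 (hv n.le_succ))
    fun n => ?_
  rw [Finset.sum_range_sub]
  linarith [hc ⟨n, rfl⟩]

lemma exists_tendstoUniformlyOn_of_norm_sub_succ_le {α E : Type*} [NormedAddCommGroup E]
    [CompleteSpace E] {F : ℕ → α → E} {s : Set α} {v : ℕ → ℝ} (hv : Monotone v)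
    (hbdd : BddAbove (range v)) (hF : ∀ n, ∀ x ∈ s, ‖F (n + 1) x - F n x‖ ≤ v (n + 1) - v n) :
    ∃ φ : α → E, TendstoUniformlyOn F φ atTop s := by
  have hseries := tendstoUniformlyOn_tsum_nat (summable_sub_succ_of_monotone hv hbdd) hF
  refine ⟨fun x => F 0 x + ∑' n, (F (n + 1) x - F n x), Metric.tendstoUniformlyOn_iff.2
    fun ε hε => (Metric.tendstoUniformlyOn_iff.1 hseries ε hε).mono fun N hN x hx => ?_⟩
  have htelescope : F N x = F 0 x + ∑ n ∈ Finset.range N, (F (n + 1) x - F n x) := by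
    rw [Finset.sum_range_sub (fun n => F n x)]
    abel
  rw [htelescope, dist_add_left]
  exact hN x hx

lemma MonotoneOn.iterate_mem_Icc_and_le_succ {α : Type*} [Preorder α] {T : α → α} {b c : α}
    (hT : MonotoneOn T (Icc b c)) (hb : b ≤ T b) (hc : T c ≤ c) (hbc : b ≤ c) (k : ℕ) :
    T^[k] b ∈ Icc b c ∧ T^[k] b ≤ T^[k + 1] b := by
  induction k with
  | zero => exact ⟨⟨le_rfl, hbc⟩, hb⟩
  | succ k ih =>
    obtain ⟨⟨hbk, hkc⟩, hk⟩ := ih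
    simp only [Function.iterate_succ_apply'] at hk ⊢
    have hTk : T (T^[k] b) ∈ Icc b c :=
      ⟨hbk.trans hk, (hT ⟨hbk, hkc⟩ ⟨hbc, le_rfl⟩ hkc).trans hc⟩
    exact ⟨hTk, hT ⟨hbk, hkc⟩ hTk hk⟩

lemma norm_pow_sub_pow_le_sub_pow {R : Type*} [SeminormedRing R] [NormOneClass R] {y y' : R}
    {Y Y' : ℝ} (hy : ‖y‖ ≤ Y) (hy' : ‖y'‖ ≤ Y') (hd : ‖y - y'‖ ≤ Y - Y') (n : ℕ) :
    ‖y ^ n - y' ^ n‖ ≤ Y ^ n - Y' ^ n := by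
  induction n with
  | zero => simp
  | succ n ih =>
    have hY : 0 ≤ Y := (norm_nonneg _).trans hy
    calc ‖y ^ (n + 1) - y' ^ (n + 1)‖ = ‖y ^ n * (y - y') + (y ^ n - y' ^ n) * y'‖ := by
          noncomm_ring
      _ ≤ ‖y‖ ^ n * ‖y - y'‖ + ‖y ^ n - y' ^ n‖ * ‖y'‖ :=
          (norm_add_le _ _).trans (add_le_add
            ((norm_mul_le _ _).trans (by gcongr; exact norm_pow_le _ _))
            (norm_mul_le _ _))
      _ ≤ Y ^ n * (Y - Y') + (Y ^ n - Y' ^ n) * Y' := by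
          gcongr
          exact (norm_nonneg _).trans ih
      _ = Y ^ (n + 1) - Y' ^ (n + 1) := by ring

def MajorantSummable (a : ℕ → ℕ → ℂ) : Prop :=
  ∀ X Y : ℝ, 0 ≤ X → 0 ≤ Y → Summable fun mn : ℕ × ℕ => ‖a mn.1 mn.2‖ * X ^ mn.1 * Y ^ mn.2

noncomputable def picardIter (a : ℕ → ℕ → ℂ) (k : ℕ) (x : ℂ) : ℂ := (psiFun a x)^[k] 0

noncomputable def majorantIter (a : ℕ → ℕ → ℂ) (X : ℝ) (k : ℕ) : ℝ := (PsiFun a X)^[k] 0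

section Majorant

variable {a : ℕ → ℕ → ℂ}

lemma MajorantSummable.summable_psiFun (ha : MajorantSummable a) (x y : ℂ) :
    Summable fun mn : ℕ × ℕ => a mn.1 mn.2 * x ^ mn.1 * y ^ mn.2 :=
  .of_norm_bounded (ha ‖x‖ ‖y‖ (norm_nonneg x) (norm_nonneg y)) fun mn => by
    simp only [norm_mul, norm_pow, le_refl]

lemma MajorantSummable.norm_psiFun_le (ha : MajorantSummable a) {x y : ℂ} {X Y : ℝ}
    (hx : ‖x‖ ≤ X) (hy : ‖y‖ ≤ Y) : ‖psiFun a x y‖ ≤ PsiFun a X Y := by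
  have hX : 0 ≤ X := (norm_nonneg x).trans hx
  refine tsum_of_norm_bounded (ha X Y hX ((norm_nonneg y).trans hy)).hasSum fun mn => ?_
  simp only [norm_mul, norm_pow]
  gcongr

lemma MajorantSummable.norm_psiFun_sub_le (ha : MajorantSummable a) {x y y' : ℂ} {X Y Y' : ℝ}
    (hx : ‖x‖ ≤ X) (hy : ‖y‖ ≤ Y) (hy' : ‖y'‖ ≤ Y') (hd : ‖y - y'‖ ≤ Y - Y') :
    ‖psiFun a x y - psiFun a x y'‖ ≤ PsiFun a X Y - PsiFun a X Y' := by
  have hX : 0 ≤ X := (norm_nonneg x).trans hx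
  rw [psiFun, psiFun, ← (ha.summable_psiFun x y).tsum_sub (ha.summable_psiFun x y')]
  refine tsum_of_norm_bounded ((ha X Y hX ((norm_nonneg y).trans hy)).hasSum.sub
    (ha X Y' hX ((norm_nonneg y').trans hy')).hasSum) fun mn => ?_
  calc ‖a mn.1 mn.2 * x ^ mn.1 * y ^ mn.2 - a mn.1 mn.2 * x ^ mn.1 * y' ^ mn.2‖
      = ‖a mn.1 mn.2‖ * ‖x‖ ^ mn.1 * ‖y ^ mn.2 - y' ^ mn.2‖ := by
        rw [← mul_sub, norm_mul, norm_mul, norm_pow]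
    _ ≤ ‖a mn.1 mn.2‖ * X ^ mn.1 * (Y ^ mn.2 - Y' ^ mn.2) := by
        gcongr
        exact norm_pow_sub_pow_le_sub_pow hy hy' hd _
    _ = _ := by ring

lemma MajorantSummable.monotoneOn_PsiFun (ha : MajorantSummable a) {X : ℝ} (hX : 0 ≤ X) :
    MonotoneOn (PsiFun a X) (Ici 0) := fun _ hY _ hY' hYY' =>
  (ha X _ hX hY).tsum_le_tsum (fun _ => by gcongr) (ha X _ hX hY')

lemma MajorantSummable.differentiableOn_psiFun_comp (ha : MajorantSummable a) {U : Set ℂ}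
    (hU : IsOpen U) {f g : ℂ → ℂ} (hf : DifferentiableOn ℂ f U) (hg : DifferentiableOn ℂ g U)
    {X Y : ℝ} (hfX : ∀ z ∈ U, ‖f z‖ ≤ X) (hgY : ∀ z ∈ U, ‖g z‖ ≤ Y) :
    DifferentiableOn ℂ (fun z => psiFun a (f z) (g z)) U := by
  rcases U.eq_empty_or_nonempty with rfl | ⟨z₀, hz₀⟩
  · exact differentiableOn_empty
  have hX : 0 ≤ X := (norm_nonneg _).trans (hfX z₀ hz₀)
  refine Complex.differentiableOn_tsum_of_summable_norm
    (ha X Y hX ((norm_nonneg _).trans (hgY z₀ hz₀)))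
    (fun mn => ((hf.pow mn.1).const_mul _).mul (hg.pow mn.2)) hU fun mn z hz => ?_
  simp only [norm_mul, norm_pow]
  gcongr
  exacts [hfX z hz, hgY z hz]

lemma MajorantSummable.differentiable_psiFun (ha : MajorantSummable a) (x : ℂ) :
    Differentiable ℂ (psiFun a x) := fun y =>
  (ha.differentiableOn_psiFun_comp (isOpen_ball (x := 0) (ε := ‖y‖ + 1))
    (differentiableOn_const x) differentiableOn_id
    (fun _ _ => le_rfl) fun _ hz => (mem_ball_zero_iff.1 hz).le).differentiableAt
    (isOpen_ball.mem_nhds (mem_ball_zero_iff.2 (lt_add_one ‖y‖)))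

end Majorant

section Picard

variable {a : ℕ → ℕ → ℂ}

lemma picardIter_succ (k : ℕ) (x : ℂ) :
    picardIter a (k + 1) x = psiFun a x (picardIter a k x) :=
  Function.iterate_succ_apply' _ _ _

lemma majorantIter_succ (X : ℝ) (k : ℕ) :
    majorantIter a X (k + 1) = PsiFun a X (majorantIter a X k) :=
  Function.iterate_succ_apply' _ _ _

lemma psiFun_zero_zero (a : ℕ → ℕ → ℂ) : psiFun a 0 0 = a 0 0 := by
  rw [psiFun, tsum_eq_single (0, 0)]
  · simp
  · rintro ⟨m, n⟩ hmn
    obtain hm | hn : m ≠ 0 ∨ n ≠ 0 := by rw [← not_and_or]; rintro ⟨rfl, rfl⟩; exact hmn rfl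
    · simp [zero_pow hm]
    · simp [zero_pow hn]

lemma picardIter_zero_right (ha₀₀ : a 0 0 = 0) (k : ℕ) : picardIter a k 0 = 0 :=
  Function.iterate_fixed (by rw [psiFun_zero_zero, ha₀₀]) k

lemma MajorantSummable.majorantIter_mem_Icc_and_le_succ (ha : MajorantSummable a) {X Y : ℝ}
    (hX : 0 ≤ X) (hY : 0 ≤ Y) (hfix : PsiFun a X Y ≤ Y) (k : ℕ) :
    majorantIter a X k ∈ Icc 0 Y ∧ majorantIter a X k ≤ majorantIter a X (k + 1) :=
  ((ha.monotoneOn_PsiFun hX).mono Icc_subset_Ici_self).iterate_mem_Icc_and_le_succ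
    (tsum_nonneg fun _ => mul_nonneg (mul_nonneg (norm_nonneg _) (pow_nonneg hX _))
      (pow_nonneg le_rfl _)) hfix hY k

lemma MajorantSummable.norm_picardIter_le (ha : MajorantSummable a) {x : ℂ} {X : ℝ}
    (hx : ‖x‖ ≤ X) (k : ℕ) :
    ‖picardIter a k x‖ ≤ majorantIter a X k ∧
      ‖picardIter a (k + 1) x - picardIter a k x‖ ≤
        majorantIter a X (k + 1) - majorantIter a X k := by
  induction k with
  | zero =>
    simpa [picardIter, majorantIter] using ha.norm_psiFun_le hx (norm_zero (E := ℂ)).le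
  | succ k ih =>
    have hk : ‖picardIter a (k + 1) x‖ ≤ majorantIter a X (k + 1) := by
      rw [picardIter_succ, majorantIter_succ]
      exact ha.norm_psiFun_le hx ih.1
    have hdiff := ha.norm_psiFun_sub_le hx hk ih.1 ih.2
    rw [← picardIter_succ, ← picardIter_succ, ← majorantIter_succ, ← majorantIter_succ] at hdiff
    exact ⟨hk, hdiff⟩

lemma MajorantSummable.differentiableOn_picardIter (ha : MajorantSummable a) {X : ℝ} (k : ℕ) :
    DifferentiableOn ℂ (picardIter a k) (ball 0 X) := by
  induction k with
  | zero => exact differentiableOn_const 0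
  | succ k ih =>
    rw [show picardIter a (k + 1) = fun z => psiFun a z (picardIter a k z) from
      funext (picardIter_succ k)]
    exact ha.differentiableOn_psiFun_comp isOpen_ball differentiableOn_id ih
      (fun z hz => (mem_ball_zero_iff.1 hz).le)
      fun z hz => (ha.norm_picardIter_le (mem_ball_zero_iff.1 hz).le k).1

end Picard

theorem stmt_18_general (a : ℕ → ℕ → ℂ)
    (ha00 : a 0 0 = 0)
    (hsum : ∀ X Y : ℝ, 0 ≤ X → 0 ≤ Y →
      Summable (fun mn : ℕ × ℕ => ‖a mn.1 mn.2‖ * X ^ mn.1 * Y ^ mn.2))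
    (Xstar : ℝ) (hXstar : 0 < Xstar) (Ystar : ℝ) (hYstar : 0 ≤ Ystar)
    (hfix : PsiFun a Xstar Ystar ≤ Ystar) :
    ∃ φ : ℂ → ℂ, AnalyticOnNhd ℂ φ (Metric.ball (0 : ℂ) Xstar) ∧ φ 0 = 0 ∧
      ∀ x : ℂ, ‖x‖ < Xstar → φ x = psiFun a x (φ x) ∧ ‖φ x‖ ≤ Ystar := by
  have ha : MajorantSummable a := hsum
  have hmaj := ha.majorantIter_mem_Icc_and_le_succ hXstar.le hYstar hfix
  have hpicard : ∀ x ∈ ball (0 : ℂ) Xstar, ∀ k, _ := fun x hx =>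
    ha.norm_picardIter_le (mem_ball_zero_iff.1 hx).le
  obtain ⟨φ, hφ⟩ := exists_tendstoUniformlyOn_of_norm_sub_succ_le
    (monotone_nat_of_le_succ fun k => (hmaj k).2) ⟨Ystar, forall_mem_range.2 fun k => (hmaj k).1.2⟩
    fun k x hx => (hpicard x hx k).2
  have hlim : ∀ x ∈ ball (0 : ℂ) Xstar, Tendsto (picardIter a · x) atTop (𝓝 (φ x)) :=
    fun x hx => hφ.tendsto_at hx
  refine ⟨φ, ?_, ?_, fun x hx => ?_⟩
  · exact (hφ.tendstoLocallyUniformlyOn.differentiableOn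
      (.of_forall ha.differentiableOn_picardIter) isOpen_ball).analyticOnNhd isOpen_ball
  · refine tendsto_nhds_unique (hlim 0 (mem_ball_self hXstar)) ?_
    simp only [picardIter_zero_right ha00, tendsto_const_nhds]
  · rw [← mem_ball_zero_iff] at hx
    refine ⟨tendsto_nhds_unique ((hlim x hx).comp (tendsto_add_atTop_nat 1)) ?_,
      le_of_tendsto' (hlim x hx).norm fun k => (hpicard x hx k).1.trans (hmaj k).1.2⟩
    simpa only [Function.comp_def, picardIter_succ] using
      ((ha.differentiable_psiFun x).continuous.tendsto _).comp (hlim x hx)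

/-- Hille-type implicit function theorem: if `a(0,0) = a(0,1) = 0`, the majorant
double series converges for all `X, Y ≥ 0`, and `Ψ(X*, Y*) ≤ Y*` for some
`X* > 0`, `Y* ≥ 0`, then there is a function `φ`, analytic on the ball of radius
`X*` with `φ(0) = 0`, satisfying `φ(x) = ψ(x, φ(x))` and `‖φ(x)‖ ≤ Y*` for all
`x` with `‖x‖ < X*`. -/
theorem stmt_18 (a : ℕ → ℕ → ℂ)
    (ha00 : a 0 0 = 0) (ha01 : a 0 1 = 0)
    (hsum : ∀ X Y : ℝ, 0 ≤ X → 0 ≤ Y →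
      Summable (fun mn : ℕ × ℕ => ‖a mn.1 mn.2‖ * X ^ mn.1 * Y ^ mn.2))
    (Xstar : ℝ) (hXstar : 0 < Xstar) (Ystar : ℝ) (hYstar : 0 ≤ Ystar)
    (hfix : PsiFun a Xstar Ystar ≤ Ystar) :
    ∃ φ : ℂ → ℂ, AnalyticOnNhd ℂ φ (Metric.ball (0 : ℂ) Xstar) ∧ φ 0 = 0 ∧
      ∀ x : ℂ, ‖x‖ < Xstar → φ x = psiFun a x (φ x) ∧ ‖φ x‖ ≤ Ystar :=
  stmt_18_general a ha00 hsum Xstar hXstar Ystar hYstar hfix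
end
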